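/- arXiv:1203.1678 — 3 statements merged into one kernel-verified Lean document; each statement's English description precedes it below -/
import Mathlib

section
/- Let (X,S) be an association scheme such that the thin radical O_θ(S) equals the thin residue O^θ(S) and is isomorphic to C_p × C_p (the elementary abelian group of order p², with p prime); call it T. If s₁, s₂ ∈ S \ T satisfy L(s₁) = L(s₂) ≅ C_p, then either s₂* s₁ ⊆ T or the complex product s₂* s₁ consists of a single element s₃ ∈ S \ T. -/
open scoped Classical

/-- The diagonal relation `1_X`. -/
def diagRel (X : Type*) : Set (X × X) := {p | p.1 = p.2}

/-- The converse relation `s*`. -/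
def conv {X : Type*} (s : Set (X × X)) : Set (X × X) := {p | (p.2, p.1) ∈ s}

/-- The intersection number `c_{st}^u`, well-defined for association schemes. -/
noncomputable def inum {X : Type*} (s t u : Set (X × X)) : ℕ :=
  sSup {n | ∃ p ∈ u, n = Nat.card {z : X | (p.1, z) ∈ s ∧ (z, p.2) ∈ t}}

/-- `(X, S)` is an association scheme. -/
def IsScheme {X : Type*} (S : Set (Set (X × X))) : Prop :=
  (∀ x y : X, ∃! s, s ∈ S ∧ (x, y) ∈ s) ∧
  (∀ s ∈ S, s.Nonempty) ∧
  diagRel X ∈ S ∧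
  (∀ s ∈ S, conv s ∈ S) ∧
  (∀ s ∈ S, ∀ t ∈ S, ∀ u ∈ S, ∀ p ∈ u, ∀ q ∈ u,
    Nat.card {z : X | (p.1, z) ∈ s ∧ (z, p.2) ∈ t} =
      Nat.card {z : X | (q.1, z) ∈ s ∧ (z, q.2) ∈ t})

/-- The complex product `PQ` of subsets of `S`. -/
noncomputable def cprod {X : Type*} (S P Q : Set (Set (X × X))) : Set (Set (X × X)) :=
  {u ∈ S | ∃ p ∈ P, ∃ q ∈ Q, inum p q u ≠ 0}

/-- The valency `n_s`. -/
noncomputable def nval {X : Type*} (s : Set (X × X)) : ℕ :=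
  sSup {n | ∃ x : X, n = Nat.card {y : X | (x, y) ∈ s}}

/-- `T` is a closed subset of `S`. -/
def IsClosedSub {X : Type*} (S T : Set (Set (X × X))) : Prop :=
  T.Nonempty ∧ T ⊆ S ∧ cprod S T T ⊆ T

/-- `T` is strongly normal in `S`. -/
def IsStronglyNormal {X : Type*} (S T : Set (Set (X × X))) : Prop :=
  IsClosedSub S T ∧ ∀ s ∈ S, cprod S (cprod S {conv s} T) {s} ⊆ T

/-- The thin radical `O_θ(S)`. -/
noncomputable def thinRadical {X : Type*} (S : Set (Set (X × X))) : Set (Set (X × X)) :=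
  {s ∈ S | nval s = 1}

/-- The thin residue `O^θ(S)`. -/
noncomputable def thinResidue {X : Type*} (S : Set (Set (X × X))) : Set (Set (X × X)) :=
  ⋂₀ {T | IsStronglyNormal S T}

/-- `T` is thin: all valencies `1`. -/
def IsThin {X : Type*} (T : Set (Set (X × X))) : Prop := ∀ t ∈ T, nval t = 1

/-- The left stabilizer `L(s) = {t ∈ T | ts = {s}}`. -/
noncomputable def lstab {X : Type*} (S T : Set (Set (X × X))) (s : Set (X × X)) :
    Set (Set (X × X)) := {t ∈ T | cprod S {t} {s} = {s}}

/-- `e` is an isomorphism from `C_p × C_p` onto the thin closed subset `T`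
(with the relational product as group operation). -/
def IsoElemAb {X : Type*} (S T : Set (Set (X × X))) (p : ℕ)
    (e : ZMod p × ZMod p → Set (X × X)) : Prop :=
  (∀ a, e a ∈ T) ∧ Function.Injective e ∧ (∀ t ∈ T, ∃ a, e a = t) ∧
  e 0 = diagRel X ∧ ∀ a b, cprod S {e a} {e b} = {e (a + b)}

/-- The coset `xT`. -/
def coset {X : Type*} (T : Set (Set (X × X))) (x : X) : Set X := {y | ∃ t ∈ T, (x, y) ∈ t}

/-- The point set `X/T`. -/
def pts {X : Type*} (T : Set (Set (X × X))) : Set (Set X) := {C | ∃ x, C = coset T x}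

/-- `L_{ij}` for the cosets of `x` and `y`: the left stabilizer of any relation containing
`(x, y)`. -/
noncomputable def pairStab {X : Type*} (S T : Set (Set (X × X))) (x y : X) :
    Set (Set (X × X)) :=
  {t ∈ T | ∀ s ∈ S, (x, y) ∈ s → cprod S {t} {s} = {s}}

/-- The line `L_i(M)` through the coset of `x` determined by the subgroup `M < T`. -/
noncomputable def lineOf {X : Type*} (S T : Set (Set (X × X))) (x : X)
    (M : Set (Set (X × X))) : Set (Set X) :=
  insert (coset T x) {C | ∃ y, C = coset T y ∧ coset T y ≠ coset T x ∧ pairStab S T x y = M}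

/-- The set of lines of the incidence structure on `X/T`. -/
noncomputable def linesOf {X : Type*} (S T : Set (Set (X × X))) : Set (Set (Set X)) :=
  {ℓ | ∃ x M, IsClosedSub S M ∧ M ⊆ T ∧ M ≠ {diagRel X} ∧ M ≠ T ∧
    ℓ = lineOf S T x M ∧ 2 ≤ Nat.card ℓ}

set_option linter.unusedSectionVars false

namespace S2
variable {X : Type*}

/-- relation composition -/
def comp (a b : Set (X × X)) : Set (X × X) := {p | ∃ z, (p.1, z) ∈ a ∧ (z, p.2) ∈ b}

lemma mem_comp {a b : Set (X × X)} {x y : X} :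
    (x, y) ∈ comp a b ↔ ∃ z, (x, z) ∈ a ∧ (z, y) ∈ b := Iff.rfl

lemma comp_assoc (a b c : Set (X × X)) : comp (comp a b) c = comp a (comp b c) := by
  ext ⟨x, y⟩
  constructor
  · rintro ⟨z, ⟨w, hw1, hw2⟩, hz⟩; exact ⟨w, hw1, z, hw2, hz⟩
  · rintro ⟨w, hw, z, hz1, hz2⟩; exact ⟨z, ⟨w, hw, hz1⟩, hz2⟩

lemma comp_mono {a a' b b' : Set (X × X)} (ha : a ⊆ a') (hb : b ⊆ b') :
    comp a b ⊆ comp a' b' := by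
  rintro ⟨x, y⟩ ⟨z, h1, h2⟩; exact ⟨z, ha h1, hb h2⟩

@[simp] lemma conv_conv (a : Set (X × X)) : conv (conv a) = a := rfl

lemma mem_conv {a : Set (X × X)} {x y : X} : (x, y) ∈ conv a ↔ (y, x) ∈ a := Iff.rfl

lemma conv_comp (a b : Set (X × X)) : conv (comp a b) = comp (conv b) (conv a) := by
  ext ⟨x, y⟩
  constructor
  · rintro ⟨z, h1, h2⟩; exact ⟨z, h2, h1⟩
  · rintro ⟨z, h1, h2⟩; exact ⟨z, h2, h1⟩

lemma comp_diag_left (a : Set (X × X)) : comp (diagRel X) a = a := by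
  ext ⟨x, y⟩
  constructor
  · rintro ⟨z, (h1 : x = z), h2⟩; exact h1 ▸ h2
  · intro h; exact ⟨x, rfl, h⟩

lemma comp_diag_right (a : Set (X × X)) : comp a (diagRel X) = a := by
  ext ⟨x, y⟩
  constructor
  · rintro ⟨z, h1, (h2 : z = y)⟩; exact h2 ▸ h1
  · intro h; exact ⟨y, h, rfl⟩

lemma comp_sUnion_left (A : Set (Set (X × X))) (b : Set (X × X)) :
    comp (⋃₀ A) b = ⋃ a ∈ A, comp a b := by
  ext ⟨x, y⟩
  constructor
  · rintro ⟨z, ⟨a, haA, ha⟩, h2⟩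
    exact Set.mem_biUnion haA ⟨z, ha, h2⟩
  · intro h
    obtain ⟨a, haA, z, h1, h2⟩ := by simpa using h
    exact ⟨z, ⟨a, haA, h1⟩, h2⟩

section scheme
variable {S : Set (Set (X × X))} (hS : IsScheme S)

include hS

lemma rel_eq {u v : Set (X × X)} {q : X × X} (hu : u ∈ S) (hv : v ∈ S)
    (hqu : q ∈ u) (hqv : q ∈ v) : u = v := by
  obtain ⟨w, _, huniq⟩ := hS.1 q.1 q.2
  have h1 := huniq u ⟨hu, by rwa [Prod.mk.eta]⟩
  have h2 := huniq v ⟨hv, by rwa [Prod.mk.eta]⟩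
  rw [h1, h2]

lemma rel_cover (q : X × X) : ∃ u ∈ S, q ∈ u := by
  obtain ⟨w, ⟨hw, hq⟩, _⟩ := hS.1 q.1 q.2
  exact ⟨w, hw, by rwa [Prod.mk.eta] at hq⟩

lemma inum_eq [Finite X] {a b u : Set (X × X)} (ha : a ∈ S) (hb : b ∈ S) (hu : u ∈ S)
    {q : X × X} (hq : q ∈ u) :
    inum a b u = Nat.card {z : X | (q.1, z) ∈ a ∧ (z, q.2) ∈ b} := by
  have : {n | ∃ p ∈ u, n = Nat.card {z : X | (p.1, z) ∈ a ∧ (z, p.2) ∈ b}} =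
      {Nat.card {z : X | (q.1, z) ∈ a ∧ (z, q.2) ∈ b}} := by
    ext n
    constructor
    · rintro ⟨p, hp, rfl⟩
      exact hS.2.2.2.2 a ha b hb u hu p hp q hq
    · rintro rfl
      exact ⟨q, hq, rfl⟩
  rw [inum, this, csSup_singleton]

lemma mem_cprod_iff [Finite X] {a b u : Set (X × X)} (ha : a ∈ S) (hb : b ∈ S) :
    u ∈ cprod S {a} {b} ↔ u ∈ S ∧ ∃ q ∈ u, q ∈ comp a b := by
  constructor
  · rintro ⟨huS, p, rfl, q', rfl, hne⟩
    obtain ⟨q, hq⟩ := hS.2.1 u huS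
    rw [inum_eq hS ha hb huS hq] at hne
    obtain ⟨⟨z, hz⟩⟩ := (Nat.card_ne_zero.mp hne).1
    exact ⟨huS, q, hq, z, hz.1, hz.2⟩
  · rintro ⟨huS, q, hq, z, h1, h2⟩
    refine ⟨huS, a, rfl, b, rfl, ?_⟩
    rw [inum_eq hS ha hb huS hq]
    exact Nat.card_ne_zero.mpr ⟨⟨z, h1, h2⟩, Set.toFinite _⟩

lemma cprod_sub_comp [Finite X] {a b u : Set (X × X)} (ha : a ∈ S) (hb : b ∈ S)
    (hu : u ∈ cprod S {a} {b}) : u ⊆ comp a b := by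
  obtain ⟨huS, p, rfl, q', rfl, hne⟩ := hu
  intro q hq
  rw [inum_eq hS ha hb huS hq] at hne
  obtain ⟨⟨z, hz⟩⟩ := (Nat.card_ne_zero.mp hne).1
  exact ⟨z, hz.1, hz.2⟩

lemma comp_rel_cover [Finite X] {a b : Set (X × X)} (ha : a ∈ S) (hb : b ∈ S)
    {q : X × X} (hq : q ∈ comp a b) :
    ∃ u ∈ cprod S {a} {b}, q ∈ u ∧ u ⊆ comp a b := by
  obtain ⟨u, huS, hqu⟩ := rel_cover hS q
  have hu : u ∈ cprod S {a} {b} := (mem_cprod_iff hS ha hb).mpr ⟨huS, q, hqu, hq⟩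
  exact ⟨u, hu, hqu, cprod_sub_comp hS ha hb hu⟩

lemma cprod_eq_singleton [Finite X] {a b : Set (X × X)} (ha : a ∈ S) (hb : b ∈ S)
    (hab : comp a b ∈ S) : cprod S {a} {b} = {comp a b} := by
  ext u
  simp only [Set.mem_singleton_iff]
  constructor
  · intro hu
    obtain ⟨q, hq⟩ := hS.2.1 u ((mem_cprod_iff hS ha hb).mp hu).1
    exact rel_eq hS ((mem_cprod_iff hS ha hb).mp hu).1 hab hq (cprod_sub_comp hS ha hb hu hq)
  · rintro rfl
    obtain ⟨q, hq⟩ := hS.2.1 _ hab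
    exact (mem_cprod_iff hS ha hb).mpr ⟨hab, q, hq, hq⟩

lemma nonemptyX : Nonempty X := by
  obtain ⟨⟨x, y⟩, _⟩ := hS.2.1 _ hS.2.2.1
  exact ⟨x⟩

lemma deg_const {u : Set (X × X)} (hu : u ∈ S) (x : X) :
    Nat.card {y : X | (x, y) ∈ u} = nval u := by
  have key : ∀ x' : X, Nat.card {y : X | (x', y) ∈ u} = Nat.card {y : X | (x, y) ∈ u} := by
    intro x'
    have h := hS.2.2.2.2 u hu (conv u) (hS.2.2.2.1 u hu) (diagRel X) hS.2.2.1
      (x', x') rfl (x, x) rfl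
    simpa [mem_conv, and_self] using h
  have : {n | ∃ x' : X, n = Nat.card {y : X | (x', y) ∈ u}} =
      {Nat.card {y : X | (x, y) ∈ u}} := by
    ext n
    constructor
    · rintro ⟨x', rfl⟩; exact key x'
    · rintro rfl; exact ⟨x, rfl⟩
  rw [nval, this, csSup_singleton]

lemma nval_ne_zero [Finite X] {u : Set (X × X)} (hu : u ∈ S) : nval u ≠ 0 := by
  obtain ⟨⟨x, y⟩, hq⟩ := hS.2.1 u hu
  rw [← deg_const hS hu x]
  exact Nat.card_ne_zero.mpr ⟨⟨y, hq⟩, Set.toFinite _⟩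

lemma exists_out [Finite X] {u : Set (X × X)} (hu : u ∈ S) (x : X) : ∃ y, (x, y) ∈ u := by
  have h := deg_const hS hu x
  have := nval_ne_zero hS hu
  rw [← h] at this
  obtain ⟨⟨y, hy⟩⟩ := (Nat.card_ne_zero.mp this).1
  exact ⟨y, hy⟩

lemma exists_in [Finite X] {u : Set (X × X)} (hu : u ∈ S) (x : X) : ∃ y, (y, x) ∈ u :=
  exists_out hS (hS.2.2.2.1 u hu) x

end scheme
end S2

namespace S2
section thin
variable {X : Type*} [Finite X] {S T : Set (Set (X × X))} {p : ℕ}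
  {e : ZMod p × ZMod p → Set (X × X)}
  (hS : IsScheme S) (hrad : thinRadical S = T) (he : IsoElemAb S T p e)

include hS hrad

lemma T_sub_S : T ⊆ S := by rw [← hrad]; exact fun t ht => ht.1

lemma thin_exu {t : Set (X × X)} (ht : t ∈ T) (x : X) : ∃! y, (x, y) ∈ t := by
  have htS : t ∈ S := T_sub_S hS hrad ht
  have h1 : nval t = 1 := by rw [← hrad] at ht; exact ht.2
  have h2 : Nat.card {y : X | (x, y) ∈ t} = 1 := by rw [deg_const hS htS x, h1]
  rw [Nat.card_coe_set_eq, Set.ncard_eq_one] at h2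
  obtain ⟨y, hy⟩ := h2
  refine ⟨y, ?_, fun y' hy' => ?_⟩
  · have : y ∈ {y : X | (x, y) ∈ t} := hy ▸ rfl
    exact this
  · have : y' ∈ ({y} : Set X) := hy ▸ hy'
    exact this

include he

lemma e_mem_T (a : ZMod p × ZMod p) : e a ∈ T := he.1 a
lemma e_mem_S (a : ZMod p × ZMod p) : e a ∈ S := T_sub_S hS hrad (he.1 a)

lemma e_comp (a b : ZMod p × ZMod p) : comp (e a) (e b) = e (a + b) := by
  have hsub : e (a + b) ⊆ comp (e a) (e b) := by
    have hmem : e (a + b) ∈ cprod S {e a} {e b} := by rw [he.2.2.2.2 a b]; rfl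
    exact cprod_sub_comp hS (e_mem_S hS hrad he a) (e_mem_S hS hrad he b) hmem
  apply Set.Subset.antisymm _ hsub
  rintro ⟨x, y⟩ ⟨z, h1, h2⟩
  obtain ⟨w, hw, hwu⟩ := thin_exu hS hrad (he.1 (a + b)) x
  obtain ⟨z', hz', hzu⟩ := hsub hw
  have hz'' : z' = z := by
    obtain ⟨z0, _, hz0u⟩ := thin_exu hS hrad (he.1 a) x
    rw [hz0u z' hz', hz0u z h1]
  rw [hz''] at hzu
  obtain ⟨y0, _, hy0u⟩ := thin_exu hS hrad (he.1 b) z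
  have : w = y := by rw [hy0u w hzu, hy0u y h2]
  rwa [← this]

lemma e_zero : e 0 = diagRel X := he.2.2.2.1

lemma conv_e (a : ZMod p × ZMod p) : conv (e a) = e (-a) := by
  have hd1 : comp (e a) (e (-a)) = diagRel X := by
    rw [e_comp hS hrad he, add_neg_cancel, e_zero hS hrad he]
  have hd2 : comp (e (-a)) (e a) = diagRel X := by
    rw [e_comp hS hrad he, neg_add_cancel, e_zero hS hrad he]
  ext ⟨x, y⟩
  constructor
  · intro hyx
    obtain ⟨w, hw, _⟩ := thin_exu hS hrad (he.1 (-a)) x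
    have : (y, w) ∈ comp (e a) (e (-a)) := ⟨x, hyx, hw⟩
    rw [hd1] at this
    exact (show y = w from this) ▸ hw
  · intro hxy
    obtain ⟨w, hw, _⟩ := thin_exu hS hrad (he.1 a) y
    have : (x, w) ∈ comp (e (-a)) (e a) := ⟨y, hxy, hw⟩
    rw [hd2] at this
    exact (show x = w from this) ▸ hw

lemma comp_e_left {s : Set (X × X)} (hs : s ∈ S) (a : ZMod p × ZMod p) :
    comp (e a) s ∈ S := by
  have hea := e_mem_S hS hrad he a
  have hena := e_mem_S hS hrad he (-a)
  -- comp (e a) s is nonempty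
  obtain ⟨⟨x, z⟩, hxz⟩ := hS.2.1 _ hea
  obtain ⟨y, hy⟩ := exists_out hS hs z
  obtain ⟨u, hu, hqu, husub⟩ := comp_rel_cover hS hea hs (q := (x, y)) ⟨z, hxz, hy⟩
  have huS : u ∈ S := ((mem_cprod_iff hS hea hs).mp hu).1
  -- comp (e (-a)) u ⊆ s
  have h1 : comp (e (-a)) u ⊆ s := by
    have := comp_mono (Set.Subset.refl (e (-a))) husub
    rwa [← comp_assoc, e_comp hS hrad he, neg_add_cancel, e_zero hS hrad he, comp_diag_left] at this
  -- comp (e (-a)) u nonempty, so s ⊆ comp (e (-a)) u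
  obtain ⟨⟨z', y'⟩, hz'y'⟩ := hS.2.1 u huS
  obtain ⟨x', hx'⟩ := exists_in hS hena z'
  have hmm : (x', y') ∈ comp (e (-a)) u := ⟨z', hx', hz'y'⟩
  obtain ⟨w, hw, hqw, hwsub⟩ := comp_rel_cover hS hena huS hmm
  have hwS : w ∈ S := ((mem_cprod_iff hS hena huS).mp hw).1
  have hws : w = s := rel_eq hS hwS hs hqw (h1 (hwsub hqw))
  have h2 : s ⊆ comp (e (-a)) u := hws ▸ hwsub
  have h3 : comp (e a) s ⊆ u := by
    have := comp_mono (Set.Subset.refl (e a)) h2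
    rwa [← comp_assoc, e_comp hS hrad he, add_neg_cancel, e_zero hS hrad he, comp_diag_left] at this
  have : comp (e a) s = u := Set.Subset.antisymm h3 husub
  rw [this]; exact huS

end thin
end S2

namespace S2
section closed
variable {X : Type*} [Finite X] {S N : Set (Set (X × X))} (hS : IsScheme S)
include hS

lemma cprod_mono {P P' Q Q' : Set (Set (X × X))} (hP : P ⊆ P') (hQ : Q ⊆ Q') :
    cprod S P Q ⊆ cprod S P' Q' := by
  rintro u ⟨huS, a, ha, b, hb, h⟩
  exact ⟨huS, a, hP ha, b, hQ hb, h⟩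

lemma diag_mem_closed (hN : IsClosedSub S N) : diagRel X ∈ N := by
  obtain ⟨t, htN⟩ := hN.1
  have htS : t ∈ S := hN.2.1 htN
  obtain ⟨x₀⟩ := nonemptyX hS
  have hg : ∀ x : X, (x, Classical.choose (exists_out hS htS x)) ∈ t :=
    fun x => Classical.choose_spec (exists_out hS htS x)
  set g : X → X := fun x => Classical.choose (exists_out hS htS x) with hgdef
  set seq : ℕ → X := fun n => g^[n] x₀ with hseqdef
  have hstep : ∀ n, (seq n, seq (n + 1)) ∈ t := by
    intro n
    have : seq (n + 1) = g (seq n) := Function.iterate_succ_apply' g n x₀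
    rw [this]; exact hg (seq n)
  have chain : ∀ j i, i < j → ∃ w ∈ N, (seq i, seq j) ∈ w := by
    intro j
    induction j with
    | zero => intro i hi; exact absurd hi (Nat.not_lt_zero i)
    | succ j ih =>
      intro i hi
      rcases Nat.lt_succ_iff_lt_or_eq.mp hi with h | h
      · obtain ⟨w, hwN, hw⟩ := ih i h
        have hq : (seq i, seq (j + 1)) ∈ comp w t := ⟨seq j, hw, hstep j⟩
        obtain ⟨v, hv, hqv, _⟩ := comp_rel_cover hS (hN.2.1 hwN) htS hq
        refine ⟨v, hN.2.2 (cprod_mono hS ?_ ?_ hv), hqv⟩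
        · exact Set.singleton_subset_iff.mpr hwN
        · exact Set.singleton_subset_iff.mpr htN
      · subst h; exact ⟨t, htN, hstep i⟩
  obtain ⟨i, j, hij, heq⟩ := Finite.exists_ne_map_eq_of_infinite seq
  have main : ∀ i j : ℕ, i < j → seq i = seq j → diagRel X ∈ N := by
    intro i j hlt he2
    obtain ⟨w, hwN, hw⟩ := chain j i hlt
    have hd : (seq i, seq j) ∈ diagRel X := he2
    have := rel_eq hS (hN.2.1 hwN) hS.2.2.1 hw hd
    rwa [← this]
  rcases lt_or_gt_of_ne hij with h | h
  · exact main i j h heq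
  · exact main j i h heq.symm

lemma residue_sub (hres : thinResidue S = T) {s : Set (X × X)} (hs : s ∈ S) :
    cprod S {conv s} {s} ⊆ T := by
  intro u hu
  rw [← hres]
  apply Set.mem_sInter.mpr
  intro N hN
  have hconvS : conv s ∈ S := hS.2.2.2.1 s hs
  have hdiag : diagRel X ∈ N := diag_mem_closed hS hN.1
  have hcs_mem : conv s ∈ cprod S {conv s} N := by
    refine ⟨hconvS, conv s, rfl, diagRel X, hdiag, ?_⟩
    obtain ⟨q, hq⟩ := hS.2.1 _ hconvS
    rw [inum_eq hS hconvS hS.2.2.1 hconvS hq]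
    refine Nat.card_ne_zero.mpr ⟨⟨q.2, ?_⟩, Set.toFinite _⟩
    exact ⟨by rwa [Prod.mk.eta], rfl⟩
  obtain ⟨huS, a, ha, b, hb, hne⟩ := hu
  rw [Set.mem_singleton_iff] at ha hb
  rw [ha, hb] at hne
  exact hN.2 s hs ⟨huS, conv s, hcs_mem, s, rfl, hne⟩

end closed
end S2

namespace S2

/-- The stabilizer of `s` under the left action of `T ≅ (ZMod p)²`. -/
def stab {X : Type*} {p : ℕ} (e : ZMod p × ZMod p → Set (X × X)) (s : Set (X × X)) :
    Set (ZMod p × ZMod p) := {a | comp (e a) s = s}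

section stab
variable {X : Type*} [Finite X] {S T : Set (Set (X × X))} {p : ℕ}
  {e : ZMod p × ZMod p → Set (X × X)} {s : Set (X × X)}
  (hS : IsScheme S) (hrad : thinRadical S = T) (he : IsoElemAb S T p e)

include hS hrad he

lemma cprod_e_left (hs : s ∈ S) (a : ZMod p × ZMod p) :
    cprod S {e a} {s} = {comp (e a) s} :=
  cprod_eq_singleton hS (e_mem_S hS hrad he a) hs (comp_e_left hS hrad he hs a)

lemma zero_mem_stab (s : Set (X × X)) : (0 : ZMod p × ZMod p) ∈ stab e s := by
  show comp (e 0) s = s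
  rw [e_zero hS hrad he, comp_diag_left]

lemma add_mem_stab {a b : ZMod p × ZMod p} (ha : a ∈ stab e s) (hb : b ∈ stab e s) :
    a + b ∈ stab e s := by
  show comp (e (a + b)) s = s
  rw [← e_comp hS hrad he, comp_assoc]
  rw [show comp (e b) s = s from hb, show comp (e a) s = s from ha]

lemma nsmul_mem_stab {a : ZMod p × ZMod p} (ha : a ∈ stab e s) (n : ℕ) :
    n • a ∈ stab e s := by
  induction n with
  | zero => rw [zero_nsmul]; exact zero_mem_stab hS hrad he s
  | succ n ih => rw [succ_nsmul]; exact add_mem_stab hS hrad he ih ha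

lemma stab_char (hs : s ∈ S) {a : ZMod p × ZMod p} :
    a ∈ stab e s ↔ e a ⊆ comp s (conv s) := by
  constructor
  · intro h
    rintro ⟨x, y⟩ hxy
    obtain ⟨z, hz⟩ := exists_out hS hs y
    have hx : (x, z) ∈ comp (e a) s := ⟨y, hxy, hz⟩
    rw [show comp (e a) s = s from h] at hx
    exact ⟨z, hx, hz⟩
  · intro hsub
    have hcs : comp (e a) s ∈ S := comp_e_left hS hrad he hs a
    obtain ⟨⟨x, y⟩, hxy⟩ := hS.2.1 _ (e_mem_S hS hrad he a)
    obtain ⟨z, h1, h2⟩ := hsub hxy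
    have hx : (x, z) ∈ comp (e a) s := ⟨y, hxy, h2⟩
    exact rel_eq hS hcs hs hx h1

lemma lstab_eq (hs : s ∈ S) : lstab S T s = e '' stab e s := by
  ext t
  constructor
  · rintro ⟨htT, hcp⟩
    obtain ⟨a, rfl⟩ := he.2.2.1 t htT
    refine ⟨a, ?_, rfl⟩
    have := (cprod_e_left hS hrad he hs a).symm.trans hcp
    exact Set.singleton_eq_singleton_iff.mp this
  · rintro ⟨a, ha, rfl⟩
    refine ⟨he.1 a, ?_⟩
    rw [cprod_e_left hS hrad he hs a, show comp (e a) s = s from ha]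

lemma comp_conv_eq (hres : thinResidue S = T) (hs : s ∈ S) :
    comp s (conv s) = ⋃ a ∈ stab e s, e a := by
  have hconvS : conv s ∈ S := hS.2.2.2.1 s hs
  have hsubT : cprod S {s} {conv s} ⊆ T := by
    have := residue_sub hS hres hconvS
    rwa [conv_conv] at this
  apply Set.Subset.antisymm
  · intro q hq
    obtain ⟨u, hu, hqu, husub⟩ := comp_rel_cover hS hs hconvS hq
    obtain ⟨a, rfl⟩ := he.2.2.1 u (hsubT hu)
    have ha : a ∈ stab e s := (stab_char hS hrad he hs).mpr husub
    exact Set.mem_biUnion ha hqu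
  · intro q hq
    obtain ⟨a, ha, hqa⟩ := Set.mem_iUnion₂.mp hq
    exact (stab_char hS hrad he hs).mp ha hqa

lemma stab_conv_mem (hres : thinResidue S = T) (hs : s ∈ S) {a : ZMod p × ZMod p}
    (h : a ∈ stab e (conv s)) : comp s (e (-a)) = s := by
  have : comp (e a) (conv s) = conv s := h
  have h2 := congrArg conv this
  rwa [conv_comp, conv_conv, conv_e hS hrad he] at h2

lemma nval_eq_card_stab (hres : thinResidue S = T) (hs : s ∈ S) :
    nval s = Nat.card (stab e (conv s)) := by
  have hconvS : conv s ∈ S := hS.2.2.2.1 s hs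
  obtain ⟨⟨x, z₀⟩, hxz⟩ := hS.2.1 s hs
  have hW : ∀ a : ↥(stab e (conv s)), ∃ w, (z₀, w) ∈ e (a : ZMod p × ZMod p) ∧ (x, w) ∈ s := by
    rintro ⟨a, ha⟩
    have hseq : comp s (e (-a)) = s := stab_conv_mem hS hrad he hres hs ha
    have hx2 : (x, z₀) ∈ comp s (e (-a)) := hseq.symm ▸ hxz
    obtain ⟨w, hw1, hw2⟩ := hx2
    have : (z₀, w) ∈ e a := by
      have : (z₀, w) ∈ conv (e (-a)) := hw2
      rwa [conv_e hS hrad he, neg_neg] at this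
    exact ⟨w, this, hw1⟩
  set F : ↥(stab e (conv s)) → ↥{y : X | (x, y) ∈ s} :=
    fun a => ⟨Classical.choose (hW a), (Classical.choose_spec (hW a)).2⟩ with hF
  have hFe : ∀ a : ↥(stab e (conv s)), (z₀, (F a : X)) ∈ e (a : ZMod p × ZMod p) :=
    fun a => (Classical.choose_spec (hW a)).1
  have hbij : Function.Bijective F := by
    constructor
    · rintro a a' hFaa
      have h1 := hFe a
      have h2 := hFe a'
      rw [hFaa] at h1
      have := rel_eq hS (e_mem_S hS hrad he _) (e_mem_S hS hrad he _) h1 h2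
      exact Subtype.ext (he.2.1 this)
    · rintro ⟨y, hy⟩
      have hq : (z₀, y) ∈ comp (conv s) s := ⟨x, hxz, hy⟩
      have : comp (conv s) (conv (conv s)) = ⋃ a ∈ stab e (conv s), e a :=
        comp_conv_eq hS hrad he hres hconvS
      rw [conv_conv] at this
      rw [this] at hq
      obtain ⟨a, ha, hqa⟩ := Set.mem_iUnion₂.mp hq
      refine ⟨⟨a, ha⟩, ?_⟩
      obtain ⟨w, hw, hwu⟩ := thin_exu hS hrad (he.1 a) z₀
      apply Subtype.ext
      show (F ⟨a, ha⟩ : X) = y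
      rw [hwu _ (hFe ⟨a, ha⟩), hwu y hqa]
  rw [← deg_const hS hs x, Nat.card_eq_of_bijective F hbij]

end stab
end S2

namespace S2
section count
variable {X : Type*} [Finite X] {S : Set (Set (X × X))} (hS : IsScheme S)
include hS

lemma card_rel {s : Set (X × X)} (hs : s ∈ S) : Nat.card s = Nat.card X * nval s := by
  haveI := Fintype.ofFinite X
  have E : ↥s ≃ Σ x : X, ↥{y : X | (x, y) ∈ s} :=
    { toFun := fun q => ⟨q.1.1, q.1.2, by show ((q : X × X).1, (q : X × X).2) ∈ s; rw [Prod.mk.eta]; exact q.2⟩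
      invFun := fun q => ⟨(q.1, q.2.1), q.2.2⟩
      left_inv := fun ⟨⟨x, y⟩, h⟩ => rfl
      right_inv := fun ⟨x, y, h⟩ => rfl }
  rw [Nat.card_congr E]
  haveI : ∀ x : X, Fintype ↥{y : X | (x, y) ∈ s} := fun x => Fintype.ofFinite _
  rw [Nat.card_eq_fintype_card, Fintype.card_sigma]
  have hdeg : ∀ x : X, Fintype.card ↥{y : X | (x, y) ∈ s} = nval s := by
    intro x; rw [← Nat.card_eq_fintype_card]; exact deg_const hS hs x
  simp only [hdeg]
  rw [Finset.sum_const, Finset.card_univ, smul_eq_mul, Nat.card_eq_fintype_card]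

lemma nval_conv {s : Set (X × X)} (hs : s ∈ S) : nval (conv s) = nval s := by
  have h1 := card_rel hS hs
  have h2 := card_rel hS (hS.2.2.2.1 s hs)
  have E : ↥(conv s) ≃ ↥s :=
    { toFun := fun q => ⟨(q.1.2, q.1.1), q.2⟩
      invFun := fun q => ⟨(q.1.2, q.1.1), by show (q.1.1, q.1.2) ∈ s; rw [Prod.mk.eta]; exact q.2⟩
      left_inv := fun ⟨⟨x, y⟩, h⟩ => rfl
      right_inv := fun ⟨⟨x, y⟩, h⟩ => rfl }
  have h3 : Nat.card (conv s) = Nat.card s := Nat.card_congr E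
  rw [h1, h2] at h3
  have hX : 0 < Nat.card X := Nat.card_pos_iff.mpr ⟨nonemptyX hS, inferInstance⟩
  exact Nat.eq_of_mul_eq_mul_left hX h3

end count

section thin2
variable {X : Type*} [Finite X] {S T : Set (Set (X × X))} {p : ℕ}
  {e : ZMod p × ZMod p → Set (X × X)}
  (hS : IsScheme S) (hrad : thinRadical S = T) (he : IsoElemAb S T p e)
include hS hrad he

lemma comp_e_right {s : Set (X × X)} (hs : s ∈ S) (a : ZMod p × ZMod p) :
    comp s (e a) ∈ S := by
  have h : comp s (e a) = conv (comp (e (-a)) (conv s)) := by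
    rw [conv_comp, conv_conv, conv_e hS hrad he, neg_neg]
  rw [h]
  exact hS.2.2.2.1 _ (comp_e_left hS hrad he (hS.2.2.2.1 s hs) (-a))

end thin2
end S2


/-- If `T = O_θ(S) = O^θ(S) ≅ C_p × C_p` and `s₁, s₂ ∈ S \\ T` have the same
left stabilizer of order `p`, then `s₂* s₁ ⊆ T` or `s₂* s₁` is a singleton outside `T`. -/
theorem stmt2 {X : Type*} [Fintype X] (p : ℕ) (hp : p.Prime)
    (S T : Set (Set (X × X))) (hS : IsScheme S)
    (hrad : thinRadical S = T) (hres : thinResidue S = T)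
    (hiso : ∃ e : ZMod p × ZMod p → Set (X × X), IsoElemAb S T p e)
    (s₁ s₂ : Set (X × X)) (hs₁ : s₁ ∈ S \ T) (hs₂ : s₂ ∈ S \ T)
    (hL : lstab S T s₁ = lstab S T s₂) (hLp : Nat.card (lstab S T s₁) = p) :
    cprod S {conv s₂} {s₁} ⊆ T ∨
      ∃ s₃ ∈ S \ T, cprod S {conv s₂} {s₁} = {s₃} := by
  classical
  obtain ⟨e, he⟩ := hiso
  obtain ⟨hs₁S, hs₁T⟩ := hs₁
  obtain ⟨hs₂S, hs₂T⟩ := hs₂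
  have hc₂ : conv s₂ ∈ S := hS.2.2.2.1 s₂ hs₂S
  have hc₁ : conv s₁ ∈ S := hS.2.2.2.1 s₁ hs₁S
  by_cases hT : ∃ t ∈ cprod S {conv s₂} {s₁}, t ∈ T
  · left
    obtain ⟨t₀, ht₀P, ht₀T⟩ := hT
    obtain ⟨c, rfl⟩ := he.2.2.1 t₀ ht₀T
    have ht₀sub : e c ⊆ S2.comp (conv s₂) s₁ := S2.cprod_sub_comp hS hc₂ hs₁S ht₀P
    obtain ⟨⟨x, y⟩, hxy⟩ := hS.2.1 _ (S2.e_mem_S hS hrad he c)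
    obtain ⟨z, hz1, hz2⟩ := ht₀sub hxy
    have hcomp : S2.comp s₂ (e c) ∈ S := S2.comp_e_right hS hrad he hs₂S c
    have hz1' : (z, x) ∈ s₂ := hz1
    have hmem : (z, y) ∈ S2.comp s₂ (e c) := ⟨x, hz1', hxy⟩
    have hkey : S2.comp s₂ (e c) = s₁ := S2.rel_eq hS hcomp hs₁S hmem hz2
    intro u huP
    have husub : u ⊆ S2.comp (conv s₂) s₁ := S2.cprod_sub_comp hS hc₂ hs₁S huP
    obtain ⟨q, hq⟩ := hS.2.1 u huP.1
    have hq2 : q ∈ S2.comp (S2.comp (conv s₂) s₂) (e c) := by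
      have h0 : q ∈ S2.comp (conv s₂) (S2.comp s₂ (e c)) := by
        rw [hkey]; exact husub hq
      rwa [← S2.comp_assoc] at h0
    obtain ⟨w, hw1, hw2⟩ := hq2
    obtain ⟨v, hvP, hqv, _⟩ := S2.comp_rel_cover hS hc₂ hs₂S hw1
    have hvT : v ∈ T := S2.residue_sub hS hres hs₂S hvP
    obtain ⟨b, rfl⟩ := he.2.2.1 v hvT
    have hq3 : q ∈ S2.comp (e b) (e c) := ⟨w, hqv, hw2⟩
    rw [S2.e_comp hS hrad he] at hq3
    have := S2.rel_eq hS huP.1 (S2.e_mem_S hS hrad he (b + c)) hq hq3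
    rw [this]; exact he.1 _
  · right
    push_neg at hT
    obtain ⟨⟨z, x⟩, hzx⟩ := hS.2.1 s₂ hs₂S
    obtain ⟨y, hy⟩ := S2.exists_out hS hs₁S z
    have hxy : (x, y) ∈ S2.comp (conv s₂) s₁ := ⟨z, hzx, hy⟩
    obtain ⟨u, huP, hqu, husub⟩ := S2.comp_rel_cover hS hc₂ hs₁S hxy
    have huS : u ∈ S := huP.1
    have huT : u ∉ T := hT u huP
    have hcu : conv u ∈ S := hS.2.2.2.1 u huS
    refine ⟨u, ⟨huS, huT⟩, ?_⟩
    have hconv_sub : ∀ {w : Set (X × X)}, w ⊆ S2.comp (conv s₂) s₁ →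
        conv w ⊆ S2.comp (conv s₁) s₂ := by
      intro w hw
      rintro ⟨a1, a2⟩ hmem
      obtain ⟨z', h1, h2⟩ := hw hmem
      exact ⟨z', h2, h1⟩
    have hconvu_sub : conv u ⊆ S2.comp (conv s₁) s₂ := hconv_sub husub
    have hs₂sub : s₂ ⊆ S2.comp s₁ (conv u) := by
      have hm : (z, x) ∈ S2.comp s₁ (conv u) := ⟨y, hy, hqu⟩
      obtain ⟨w, hwP, hqw, hwsub⟩ := S2.comp_rel_cover hS hs₁S hcu hm
      have hws := S2.rel_eq hS hwP.1 hs₂S hqw hzx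
      exact hws ▸ hwsub
    have hstab12 : S2.stab e s₁ = S2.stab e s₂ := by
      have h1 := S2.lstab_eq hS hrad he hs₁S
      have h2 := S2.lstab_eq hS hrad he hs₂S
      have h3 := hL
      rw [h1, h2] at h3
      exact Set.image_injective.mpr he.2.1 h3
    have hsub_stab : S2.stab e (conv u) ⊆ S2.stab e (conv s₁) := by
      intro a ha
      apply (S2.stab_char hS hrad he hc₁).mpr
      rw [S2.conv_conv]
      have h1 : e a ⊆ S2.comp (conv u) u := by
        have h0 := (S2.stab_char hS hrad he hcu).mp ha
        rwa [S2.conv_conv] at h0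
      intro q hq
      obtain ⟨m, hm1, hm2⟩ := h1 hq
      obtain ⟨r1, hr1a, hr1b⟩ := hconvu_sub hm1
      obtain ⟨r2, hr2a, hr2b⟩ := husub hm2
      have hr : (r1, r2) ∈ S2.comp s₂ (conv s₂) := ⟨m, hr1b, hr2a⟩
      rw [S2.comp_conv_eq hS hrad he hres hs₂S] at hr
      obtain ⟨b, hb, hrb⟩ := Set.mem_iUnion₂.mp hr
      rw [← hstab12] at hb
      have hq4 : (r1, q.2) ∈ S2.comp (e b) s₁ := ⟨r2, hrb, hr2b⟩
      rw [show S2.comp (e b) s₁ = s₁ from hb] at hq4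
      exact ⟨r1, hr1a, hq4⟩
    have hcard1 : Nat.card (S2.stab e (conv s₁)) = p := by
      have h9 : nval s₁ = Nat.card (S2.stab e (conv s₁)) :=
        S2.nval_eq_card_stab hS hrad he hres hs₁S
      have h9' : nval (conv s₁) = Nat.card (S2.stab e s₁) := by
        have h0 := S2.nval_eq_card_stab hS hrad he hres hc₁
        rwa [S2.conv_conv] at h0
      have h10 : nval (conv s₁) = nval s₁ := S2.nval_conv hS hs₁S
      have hls : Nat.card (lstab S T s₁) = Nat.card (S2.stab e s₁) := by
        rw [S2.lstab_eq hS hrad he hs₁S, Nat.card_coe_set_eq,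
          Set.ncard_image_of_injective _ he.2.1, ← Nat.card_coe_set_eq]
      omega
    have hcardu : Nat.card (S2.stab e (conv u)) ≠ 1 := by
      intro h1
      have h9 : nval u = Nat.card (S2.stab e (conv u)) :=
        S2.nval_eq_card_stab hS hrad he hres huS
      have hthin : u ∈ thinRadical S := ⟨huS, by rw [h9, h1]⟩
      rw [hrad] at hthin; exact huT hthin
    haveI : NeZero p := ⟨hp.pos.ne'⟩
    have hbig : p ≤ (S2.stab e (conv u)).ncard := by
      have h0 : (0 : ZMod p × ZMod p) ∈ S2.stab e (conv u) := S2.zero_mem_stab hS hrad he _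
      have hex : ∃ a ∈ S2.stab e (conv u), a ≠ 0 := by
        by_contra hcon
        push_neg at hcon
        have hsing : S2.stab e (conv u) = {0} := Set.eq_singleton_iff_unique_mem.mpr ⟨h0, hcon⟩
        apply hcardu
        rw [Nat.card_coe_set_eq, hsing, Set.ncard_singleton]
      obtain ⟨a, ha, ha0⟩ := hex
      have himg : (fun k : ZMod p => ((k * a.1, k * a.2) : ZMod p × ZMod p)) '' Set.univ ⊆
          S2.stab e (conv u) := by
        rintro _ ⟨k, -, rfl⟩
        have hn := S2.nsmul_mem_stab hS hrad he ha k.val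
        have heq : (k.val : ℕ) • a = ((k * a.1, k * a.2) : ZMod p × ZMod p) := by
          rw [Prod.smul_def]
          simp only [nsmul_eq_mul]
          rw [ZMod.natCast_val, ZMod.cast_id]
        rwa [heq] at hn
      have hinj : Function.Injective
          (fun k : ZMod p => ((k * a.1, k * a.2) : ZMod p × ZMod p)) := by
        haveI := Fact.mk hp
        intro k k' hkk
        simp only [Prod.mk.injEq] at hkk
        have hcomp : a.1 ≠ 0 ∨ a.2 ≠ 0 := by
          by_contra hcc
          push_neg at hcc
          exact ha0 (Prod.ext hcc.1 hcc.2)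
        rcases hcomp with h | h
        · exact mul_right_cancel₀ h hkk.1
        · exact mul_right_cancel₀ h hkk.2
      calc p = (Set.univ : Set (ZMod p)).ncard := by rw [Set.ncard_univ, Nat.card_zmod]
        _ = ((fun k : ZMod p => ((k * a.1, k * a.2) : ZMod p × ZMod p)) '' Set.univ).ncard :=
            (Set.ncard_image_of_injective _ hinj).symm
        _ ≤ (S2.stab e (conv u)).ncard := Set.ncard_le_ncard himg (Set.toFinite _)
    have hstabeq : S2.stab e (conv u) = S2.stab e (conv s₁) := by
      apply Set.eq_of_subset_of_ncard_le hsub_stab ?_ (Set.toFinite _)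
      have : (S2.stab e (conv s₁)).ncard = p := by
        rw [← Nat.card_coe_set_eq]; exact hcard1
      rw [this]; exact hbig
    apply Set.eq_singleton_iff_unique_mem.mpr ⟨huP, ?_⟩
    intro w hwP
    have hwS : w ∈ S := hwP.1
    have hwsub : w ⊆ S2.comp (conv s₂) s₁ := S2.cprod_sub_comp hS hc₂ hs₁S hwP
    have hconvw_sub : conv w ⊆ S2.comp (conv s₁) s₂ := hconv_sub hwsub
    obtain ⟨qw, hqw⟩ := hS.2.1 (conv w) (hS.2.2.2.1 w hwS)
    have hq2 : qw ∈ S2.comp (S2.comp (conv s₁) s₁) (conv u) := by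
      have h0 := hconvw_sub hqw
      have h2 := S2.comp_mono (Set.Subset.refl (conv s₁)) hs₂sub h0
      rwa [← S2.comp_assoc] at h2
    obtain ⟨m, hm1, hm2⟩ := hq2
    obtain ⟨v, hvP, hqv, hvsub⟩ := S2.comp_rel_cover hS hc₁ hs₁S hm1
    have hvT : v ∈ T := S2.residue_sub hS hres hs₁S hvP
    obtain ⟨b, rfl⟩ := he.2.2.1 v hvT
    have hbstab : b ∈ S2.stab e (conv s₁) :=
      (S2.stab_char hS hrad he hc₁).mpr (by rwa [S2.conv_conv])
    rw [← hstabeq] at hbstab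
    have hq5 : qw ∈ S2.comp (e b) (conv u) := ⟨m, hqv, hm2⟩
    rw [show S2.comp (e b) (conv u) = conv u from hbstab] at hq5
    have hwu : conv w = conv u :=
      S2.rel_eq hS (hS.2.2.2.1 w hwS) hcu hqw hq5
    have := congrArg conv hwu
    rwa [S2.conv_conv, S2.conv_conv] at this
end

section
/- Let (X,S) be an association scheme with T := O_θ(S) = O^θ(S) ≅ C_p × C_p. Define points P = X/T (cosets of T) and lines L as in the incidence structure induced by the left stabilizers: for cosets i,j with a relation s meeting X_i × X_j, set L_{ij} = L(s), and for a proper nontrivial subgroup M of T set L_i(M) = {i} ∪ {j | L_{ij} = M}, with lines all L_i(M) having at least 2 elements. Then (P, L) is a partial linear space: every pair of distinct points lies on at most one line, and every point belongs to at most p+1 lines. -/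
open scoped Classical

/-! ### Auxiliary development -/

namespace Stmt4Aux

set_option linter.unusedSectionVars false

/-- Relational composition. -/
def rcomp {X : Type*} (r₁ r₂ : Set (X × X)) : Set (X × X) :=
  {p | ∃ z, (p.1, z) ∈ r₁ ∧ (z, p.2) ∈ r₂}

section Basic

variable {X : Type*}

lemma mem_rcomp {r₁ r₂ : Set (X × X)} {a b : X} :
    (a, b) ∈ rcomp r₁ r₂ ↔ ∃ z, (a, z) ∈ r₁ ∧ (z, b) ∈ r₂ := Iff.rfl

lemma rcomp_assoc (r₁ r₂ r₃ : Set (X × X)) :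
    rcomp (rcomp r₁ r₂) r₃ = rcomp r₁ (rcomp r₂ r₃) := by
  ext ⟨a, b⟩
  constructor
  · rintro ⟨z, ⟨w, h1, h2⟩, h3⟩; exact ⟨w, h1, z, h2, h3⟩
  · rintro ⟨w, h1, z, h2, h3⟩; exact ⟨z, ⟨w, h1, h2⟩, h3⟩

lemma rcomp_diag (r : Set (X × X)) : rcomp r (diagRel X) = r := by
  ext ⟨a, b⟩
  constructor
  · rintro ⟨z, h1, h2⟩; cases h2; exact h1
  · intro h; exact ⟨b, h, rfl⟩

lemma diag_rcomp (r : Set (X × X)) : rcomp (diagRel X) r = r := by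
  ext ⟨a, b⟩
  constructor
  · rintro ⟨z, h1, h2⟩; cases h1; exact h2
  · intro h; exact ⟨a, rfl, h⟩

@[simp] lemma conv_conv (r : Set (X × X)) : conv (conv r) = r := rfl

lemma mem_conv {r : Set (X × X)} {a b : X} : (a, b) ∈ conv r ↔ (b, a) ∈ r := Iff.rfl

lemma conv_rcomp (r₁ r₂ : Set (X × X)) : conv (rcomp r₁ r₂) = rcomp (conv r₂) (conv r₁) := by
  ext ⟨a, b⟩
  constructor
  · rintro ⟨z, h1, h2⟩; exact ⟨z, h2, h1⟩
  · rintro ⟨z, h1, h2⟩; exact ⟨z, h2, h1⟩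

lemma conv_diag : conv (diagRel X) = diagRel X := by
  ext ⟨a, b⟩; exact ⟨fun h => h.symm, fun h => h.symm⟩

lemma conv_inj {r₁ r₂ : Set (X × X)} (h : conv r₁ = conv r₂) : r₁ = r₂ := by
  have := congrArg conv h; rwa [conv_conv, conv_conv] at this

end Basic

section SchemeBasic

variable {X : Type*} [Fintype X] {S : Set (Set (X × X))} (hS : IsScheme S)
include hS

/-- two relations sharing a pair are equal -/
lemma rel_eq {s t : Set (X × X)} {x y : X} (hs : s ∈ S) (ht : t ∈ S)
    (hxs : (x, y) ∈ s) (hxt : (x, y) ∈ t) : s = t := by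
  obtain ⟨u, _, hu⟩ := hS.1 x y
  rw [hu s ⟨hs, hxs⟩, hu t ⟨ht, hxt⟩]

/-- the unique relation containing `(x,y)` -/
noncomputable def relOf (x y : X) : Set (X × X) :=
  (hS.1 x y).exists.choose

lemma relOf_mem (x y : X) : relOf hS x y ∈ S := (hS.1 x y).exists.choose_spec.1

lemma mem_relOf (x y : X) : (x, y) ∈ relOf hS x y := (hS.1 x y).exists.choose_spec.2

lemma relOf_eq {s : Set (X × X)} {x y : X} (hs : s ∈ S) (hxy : (x, y) ∈ s) :
    relOf hS x y = s := rel_eq hS (relOf_mem hS x y) hs (mem_relOf hS x y) hxy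

lemma nonempty_X : Nonempty X := by
  obtain ⟨⟨a, b⟩, -⟩ := hS.2.1 (diagRel X) hS.2.2.1
  exact ⟨a⟩

lemma row_card_eq {s : Set (X × X)} (hs : s ∈ S) (x x' : X) :
    Nat.card {y | (x, y) ∈ s} = Nat.card {y | (x', y) ∈ s} := by
  have h := hS.2.2.2.2 s hs (conv s) (hS.2.2.2.1 s hs) (diagRel X) hS.2.2.1
    (x, x) rfl (x', x') rfl
  simpa only [mem_conv, and_self] using h

lemma row_nonempty {s : Set (X × X)} (hs : s ∈ S) (x : X) : ∃ y, (x, y) ∈ s := by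
  obtain ⟨⟨a, b⟩, hab⟩ := hS.2.1 s hs
  by_contra h
  push_neg at h
  have h0 : Nat.card {y | (x, y) ∈ s} = 0 := by
    have : {y | (x, y) ∈ s} = ∅ := Set.eq_empty_iff_forall_notMem.2 h
    simp [this]
  have h1 : 0 < Nat.card {y | (a, y) ∈ s} := by
    have : Nonempty {y | (a, y) ∈ s} := ⟨⟨b, hab⟩⟩
    exact Nat.card_pos
  rw [row_card_eq hS hs a x, h0] at h1
  exact absurd h1 (lt_irrefl 0)

lemma col_nonempty {s : Set (X × X)} (hs : s ∈ S) (y : X) : ∃ x, (x, y) ∈ s :=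
  row_nonempty hS (hS.2.2.2.1 s hs) y

lemma nval_eq_row {s : Set (X × X)} (hs : s ∈ S) (x : X) :
    nval s = Nat.card {y | (x, y) ∈ s} := by
  have hne := nonempty_X hS
  have : {n | ∃ x0 : X, n = Nat.card {y : X | (x0, y) ∈ s}}
      = {Nat.card {y | (x, y) ∈ s}} := by
    ext n
    simp only [Set.mem_setOf_eq, Set.mem_singleton_iff]
    constructor
    · rintro ⟨x0, rfl⟩; exact row_card_eq hS hs x0 x
    · rintro rfl; exact ⟨x, rfl⟩
  rw [nval, this, csSup_singleton]

end SchemeBasic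

section Cprod

variable {X : Type*} [Fintype X] {S : Set (Set (X × X))} (hS : IsScheme S)
include hS

lemma inum_eq {s t u : Set (X × X)} (hs : s ∈ S) (ht : t ∈ S) (hu : u ∈ S)
    {a b : X} (hab : (a, b) ∈ u) :
    inum s t u = Nat.card {z | (a, z) ∈ s ∧ (z, b) ∈ t} := by
  have : {n | ∃ p ∈ u, n = Nat.card {z : X | (p.1, z) ∈ s ∧ (z, p.2) ∈ t}}
      = {Nat.card {z | (a, z) ∈ s ∧ (z, b) ∈ t}} := by
    ext n
    simp only [Set.mem_setOf_eq, Set.mem_singleton_iff]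
    constructor
    · rintro ⟨⟨c, d⟩, hcd, rfl⟩
      exact hS.2.2.2.2 s hs t ht u hu (c, d) hcd (a, b) hab
    · rintro rfl
      exact ⟨(a, b), hab, rfl⟩
  rw [inum, this, csSup_singleton]

lemma mem_cprod_iff {s t u : Set (X × X)} (hs : s ∈ S) (ht : t ∈ S) :
    u ∈ cprod S {s} {t} ↔ u ∈ S ∧ (u ∩ rcomp s t).Nonempty := by
  constructor
  · rintro ⟨huS, p, hp, q, hq, hne⟩
    rw [Set.mem_singleton_iff] at hp hq
    rw [hp, hq] at hne
    refine ⟨huS, ?_⟩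
    obtain ⟨⟨a, b⟩, hab⟩ := hS.2.1 u huS
    rw [inum_eq hS hs ht huS hab] at hne
    have : Nonempty {z | (a, z) ∈ s ∧ (z, b) ∈ t} := by
      rcases Nat.eq_zero_or_pos (Nat.card {z | (a, z) ∈ s ∧ (z, b) ∈ t}) with h | h
      · exact absurd h hne
      · exact (Nat.card_pos_iff.1 h).1
    obtain ⟨z, hz1, hz2⟩ := this
    exact ⟨(a, b), hab, z, hz1, hz2⟩
  · rintro ⟨huS, ⟨a, b⟩, hab, z, hz1, hz2⟩
    refine ⟨huS, s, rfl, t, rfl, ?_⟩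
    rw [inum_eq hS hs ht huS hab]
    have : Nonempty {z | (a, z) ∈ s ∧ (z, b) ∈ t} := ⟨⟨z, hz1, hz2⟩⟩
    exact Nat.card_pos.ne'


lemma cprod_singleton_subset_rcomp {s t u : Set (X × X)} (hs : s ∈ S) (ht : t ∈ S)
    (hu : u ∈ cprod S {s} {t}) : u ⊆ rcomp s t := by
  obtain ⟨huS, ⟨a, b⟩, hab, z, hz1, hz2⟩ := (mem_cprod_iff hS hs ht).1 hu
  rintro ⟨c, d⟩ hcd
  have h := inum_eq hS hs ht huS hcd
  rw [inum_eq hS hs ht huS hab] at h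
  have hne : Nonempty {z | (a, z) ∈ s ∧ (z, b) ∈ t} := ⟨⟨z, hz1, hz2⟩⟩
  have : 0 < Nat.card {z | (c, z) ∈ s ∧ (z, d) ∈ t} := h ▸ Nat.card_pos
  obtain ⟨w, hw1, hw2⟩ := (Nat.card_pos_iff.1 this).1
  exact ⟨w, hw1, hw2⟩

lemma cprod_mono {P Q P' Q' : Set (Set (X × X))} (hP : P ⊆ P') (hQ : Q ⊆ Q') :
    cprod S P Q ⊆ cprod S P' Q' := by
  rintro u ⟨huS, p, hp, q, hq, h⟩
  exact ⟨huS, p, hP hp, q, hQ hq, h⟩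

lemma rcomp_eq_union {s t : Set (X × X)} (hs : s ∈ S) (ht : t ∈ S) {a b : X}
    (hab : (a, b) ∈ rcomp s t) : ∃ u ∈ cprod S {s} {t}, (a, b) ∈ u := by
  refine ⟨relOf hS a b, ?_, mem_relOf hS a b⟩
  rw [mem_cprod_iff hS hs ht]
  exact ⟨relOf_mem hS a b, (a, b), mem_relOf hS a b, hab⟩

end Cprod

section RcompMono

variable {X : Type*}

lemma rcomp_mono_right {r t t' : Set (X × X)} (h : t ⊆ t') : rcomp r t ⊆ rcomp r t' := by
  rintro ⟨a, b⟩ ⟨z, h1, h2⟩; exact ⟨z, h1, h h2⟩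

lemma rcomp_mono_left {r r' t : Set (X × X)} (h : r ⊆ r') : rcomp r t ⊆ rcomp r' t := by
  rintro ⟨a, b⟩ ⟨z, h1, h2⟩; exact ⟨z, h h1, h2⟩

end RcompMono

section TGroup

variable {X : Type*} [Fintype X] {S T : Set (Set (X × X))} {p : ℕ}
  {e : ZMod p × ZMod p → Set (X × X)}
  (hS : IsScheme S) (hrad : thinRadical S = T) (he : IsoElemAb S T p e)
include hS hrad he

lemma hTS : T ⊆ S := by
  rw [← hrad]; exact fun s hs => hs.1

lemma conv_mem_S {s : Set (X × X)} (hs : s ∈ S) : conv s ∈ S := hS.2.2.2.1 s hs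

lemma conv_mem_S_iff {s : Set (X × X)} : conv s ∈ S ↔ s ∈ S := by
  constructor
  · intro h; have := hS.2.2.2.1 (conv s) h; rwa [conv_conv] at this
  · exact conv_mem_S hS hrad he

lemma t_fun {t : Set (X × X)} (ht : t ∈ T) {x y y' : X} (h1 : (x, y) ∈ t)
    (h2 : (x, y') ∈ t) : y = y' := by
  have htm : t ∈ thinRadical S := hrad ▸ ht
  have h := nval_eq_row hS htm.1 x
  rw [htm.2] at h
  have hsub : Subsingleton {y | (x, y) ∈ t} := (Nat.card_eq_one_iff_unique.1 h.symm).1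
  exact Subtype.mk_eq_mk.1 (hsub.elim ⟨y, h1⟩ ⟨y', h2⟩)

lemma conv_e (a : ZMod p × ZMod p) : conv (e a) = e (-a) := by
  have h := he.2.2.2.2 a (-a)
  rw [add_neg_cancel, he.2.2.2.1] at h
  have hd : diagRel X ∈ cprod S {e a} {e (-a)} := by rw [h]; rfl
  obtain ⟨-, ⟨x, x'⟩, hx, z, h1, h2⟩ :=
    (mem_cprod_iff hS (hTS hS hrad he (he.1 a)) (hTS hS hrad he (he.1 (-a)))).1 hd
  have hxx : x = x' := hx
  subst hxx
  exact rel_eq hS (conv_mem_S hS hrad he (hTS hS hrad he (he.1 a)))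
    (hTS hS hrad he (he.1 (-a))) (show (z, x) ∈ conv (e a) from h1) h2

lemma conv_mem_T {t : Set (X × X)} (ht : t ∈ T) : conv t ∈ T := by
  obtain ⟨a, rfl⟩ := he.2.2.1 t ht
  rw [conv_e hS hrad he]
  exact he.1 (-a)

lemma t_cofun {t : Set (X × X)} (ht : t ∈ T) {x x' y : X} (h1 : (x, y) ∈ t)
    (h2 : (x', y) ∈ t) : x = x' :=
  t_fun hS hrad he (conv_mem_T hS hrad he ht) (show (y, x) ∈ conv t from h1)
    (show (y, x') ∈ conv t from h2)

lemma thin_cprod_left {t s : Set (X × X)} (ht : t ∈ T) (hs : s ∈ S) :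
    rcomp t s ∈ S ∧ cprod S {t} {s} = {rcomp t s} := by
  have htS := hTS hS hrad he ht
  have key : ∀ u ∈ cprod S {t} {s}, u = rcomp t s := by
    intro u hu
    have huS : u ∈ S := hu.1
    have hsub : u ⊆ rcomp t s := cprod_singleton_subset_rcomp hS htS hs hu
    have h1 : rcomp (conv t) u ⊆ s := by
      rintro ⟨y, w⟩ ⟨x, hxy, hxw⟩
      obtain ⟨y', hy', hw⟩ := hsub hxw
      have : y = y' := t_fun hS hrad he ht hxy hy'
      subst this; exact hw
    have h2 : s ⊆ rcomp (conv t) u := by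
      obtain ⟨⟨a, b⟩, hab⟩ := hS.2.1 u huS
      obtain ⟨y, hy⟩ := row_nonempty hS htS a
      have hyb : (y, b) ∈ rcomp (conv t) u := ⟨a, hy, hab⟩
      have hyb' : (y, b) ∈ s := h1 hyb
      have hrel : relOf hS y b ∈ cprod S {conv t} {u} := by
        rw [mem_cprod_iff hS (conv_mem_S hS hrad he htS) huS]
        exact ⟨relOf_mem hS y b, (y, b), mem_relOf hS y b, hyb⟩
      have hrs : relOf hS y b = s := relOf_eq hS hs hyb'
      calc s = relOf hS y b := hrs.symm
        _ ⊆ rcomp (conv t) u :=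
          cprod_singleton_subset_rcomp hS (conv_mem_S hS hrad he htS) huS hrel
    have h3 : rcomp t s ⊆ u := by
      refine (rcomp_mono_right h2).trans ?_
      rintro ⟨x, w⟩ ⟨y, hxy, x', hx'y, hx'w⟩
      have : x = x' := t_cofun hS hrad he ht hxy hx'y
      subst this; exact hx'w
    exact subset_antisymm hsub h3
  obtain ⟨x⟩ := nonempty_X hS
  obtain ⟨y, hy⟩ := row_nonempty hS htS x
  obtain ⟨z, hz⟩ := row_nonempty hS hs y
  have hu0 : relOf hS x z ∈ cprod S {t} {s} := by
    rw [mem_cprod_iff hS htS hs]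
    exact ⟨relOf_mem hS x z, (x, z), mem_relOf hS x z, y, hy, hz⟩
  have he0 : relOf hS x z = rcomp t s := key _ hu0
  refine ⟨he0 ▸ relOf_mem hS x z, ?_⟩
  ext u
  simp only [Set.mem_singleton_iff]
  exact ⟨fun h => key u h, fun h => h ▸ (he0 ▸ hu0)⟩

lemma conv_mem_cprod_iff {s t u : Set (X × X)} (hs : s ∈ S) (ht : t ∈ S) :
    u ∈ cprod S {s} {t} ↔ conv u ∈ cprod S {conv t} {conv s} := by
  rw [mem_cprod_iff hS hs ht, mem_cprod_iff hS (conv_mem_S hS hrad he ht)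
    (conv_mem_S hS hrad he hs)]
  constructor
  · rintro ⟨huS, ⟨a, b⟩, hu, z, h1, h2⟩
    exact ⟨conv_mem_S hS hrad he huS, (b, a), hu, z, h2, h1⟩
  · rintro ⟨huS, ⟨b, a⟩, hu, z, h1, h2⟩
    exact ⟨(conv_mem_S_iff hS hrad he).1 huS, (a, b), hu, z, h2, h1⟩

lemma thin_cprod_right {s t : Set (X × X)} (hs : s ∈ S) (ht : t ∈ T) :
    rcomp s t ∈ S ∧ cprod S {s} {t} = {rcomp s t} := by
  have hct : conv t ∈ T := conv_mem_T hS hrad he ht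
  obtain ⟨hmemS, hleft⟩ := thin_cprod_left hS hrad he hct (conv_mem_S hS hrad he hs)
  have hcc : conv (rcomp (conv t) (conv s)) = rcomp s t := by
    rw [conv_rcomp, conv_conv, conv_conv]
  constructor
  · rw [← hcc]; exact conv_mem_S hS hrad he hmemS
  · ext u
    rw [conv_mem_cprod_iff hS hrad he hs (hTS hS hrad he ht), hleft]
    simp only [Set.mem_singleton_iff]
    constructor
    · intro h
      have := congrArg conv h
      rwa [conv_conv, hcc] at this
    · rintro rfl
      rw [← hcc, conv_conv]

lemma e_rcomp (a b : ZMod p × ZMod p) : rcomp (e a) (e b) = e (a + b) := by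
  have h1 := (thin_cprod_right hS hrad he (hTS hS hrad he (he.1 a)) (he.1 b)).2
  have h2 := he.2.2.2.2 a b
  rw [h1] at h2
  exact Set.singleton_eq_singleton_iff.1 h2

end TGroup

/-- `L(s) = T ∩ ss*`, realized as the complex product `s s*`. -/
noncomputable def Lset {X : Type*} (S : Set (Set (X × X))) (s : Set (X × X)) :
    Set (Set (X × X)) := cprod S {s} {conv s}

section Geometry

variable {X : Type*} [Fintype X] {S T : Set (Set (X × X))} {p : ℕ}
  {e : ZMod p × ZMod p → Set (X × X)}
  (hS : IsScheme S) (hrad : thinRadical S = T) (hres : thinResidue S = T)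
  (he : IsoElemAb S T p e)

include hS in
lemma diag_mem_closed {T' : Set (Set (X × X))} (hT' : IsClosedSub S T') :
    diagRel X ∈ T' := by
  obtain ⟨t₀, ht₀⟩ := hT'.1
  have ht₀S : t₀ ∈ S := hT'.2.1 ht₀
  obtain ⟨⟨a₀, b₀⟩, hab⟩ := hS.2.1 t₀ ht₀S
  choose f hf using row_nonempty hS ht₀S
  set g : ℕ → X := fun n => f^[n] b₀ with hg
  have hstep : ∀ n, (g n, g (n + 1)) ∈ t₀ := by
    intro n
    have : g (n + 1) = f (g n) := by rw [hg]; simp [Function.iterate_succ_apply']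
    rw [this]; exact hf _
  have htrans : ∀ {x y z : X}, (∃ u ∈ T', (x, y) ∈ u) → (∃ u ∈ T', (y, z) ∈ u) →
      ∃ u ∈ T', (x, z) ∈ u := by
    rintro x y z ⟨u, hu, hxy⟩ ⟨v, hv, hyz⟩
    refine ⟨relOf hS x z, ?_, mem_relOf hS x z⟩
    apply hT'.2.2
    apply cprod_mono hS (Set.singleton_subset_iff.2 hu) (Set.singleton_subset_iff.2 hv)
    rw [mem_cprod_iff hS (hT'.2.1 hu) (hT'.2.1 hv)]
    exact ⟨relOf_mem hS x z, (x, z), mem_relOf hS x z, y, hxy, hyz⟩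
  have hchain : ∀ j i, i < j → ∃ u ∈ T', (g i, g j) ∈ u := by
    intro j
    induction j with
    | zero => intro i h; exact absurd h (Nat.not_lt_zero i)
    | succ j ih =>
      intro i hij
      rcases Nat.lt_succ_iff_lt_or_eq.1 hij with h | h
      · exact htrans (ih i h) ⟨t₀, ht₀, hstep j⟩
      · subst h; exact ⟨t₀, ht₀, hstep i⟩
  obtain ⟨i, j, hne, heq⟩ := Finite.exists_ne_map_eq_of_infinite g
  have hii : ∃ u ∈ T', (g i, g i) ∈ u := by
    rcases hne.lt_or_gt with h | h
    · have := hchain j i h; rwa [← heq] at this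
    · have := hchain i j h; rwa [← heq] at this
  obtain ⟨u, hu, huu⟩ := hii
  have : u = diagRel X := rel_eq hS (hT'.2.1 hu) hS.2.2.1 huu rfl
  exact this ▸ hu

include hS hres in
lemma Rset_sub_T {s : Set (X × X)} (hs : s ∈ S) : cprod S {conv s} {s} ⊆ T := by
  intro u hu
  rw [← hres]
  refine Set.mem_sInter.2 fun T' hT' => ?_
  have hd : diagRel X ∈ T' := diag_mem_closed hS hT'.1
  have hcsS : conv s ∈ S := hS.2.2.2.1 s hs
  have hcs : conv s ∈ cprod S {conv s} T' := by
    obtain ⟨⟨y, x⟩, hyx⟩ := hS.2.1 (conv s) hcsS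
    refine ⟨hcsS, conv s, rfl, diagRel X, hd, ?_⟩
    rw [inum_eq hS hcsS hS.2.2.1 hcsS hyx]
    have : Nonempty {z | (y, z) ∈ conv s ∧ (z, x) ∈ diagRel X} := ⟨⟨x, hyx, rfl⟩⟩
    exact Nat.card_pos.ne'
  refine hT'.2 s hs ?_
  obtain ⟨huS, p, hp, q, hq, hne⟩ := hu
  rw [Set.mem_singleton_iff] at hp hq
  exact ⟨huS, conv s, hcs, s, rfl, by rwa [hp, hq] at hne⟩

include hS hres in
lemma Lset_sub_T {s : Set (X × X)} (hs : s ∈ S) : Lset S s ⊆ T := by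
  have h := Rset_sub_T hS hres (hS.2.2.2.1 s hs)
  rw [conv_conv] at h
  exact h

include hS hrad he in
lemma mem_L_iff {s t : Set (X × X)} (hs : s ∈ S) (ht : t ∈ T) :
    t ∈ Lset S s ↔ rcomp t s = s := by
  have htS : t ∈ S := hTS hS hrad he ht
  constructor
  · intro hmem
    have hsub : t ⊆ rcomp s (conv s) :=
      cprod_singleton_subset_rcomp hS hs (hS.2.2.2.1 s hs) hmem
    obtain ⟨⟨x₀, w⟩, hxw⟩ := hS.2.1 t htS
    obtain ⟨z, hxz, hwz⟩ := hsub hxw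
    refine rel_eq hS (thin_cprod_left hS hrad he ht hs).1 hs ⟨w, hxw, ?_⟩ hxz
    exact show (w, z) ∈ s from hwz
  · intro h
    rw [Lset, mem_cprod_iff hS hs (hS.2.2.2.1 s hs)]
    obtain ⟨⟨x₀, w⟩, hxw⟩ := hS.2.1 t htS
    obtain ⟨z, hwz⟩ := row_nonempty hS hs w
    have hxz : (x₀, z) ∈ s := h ▸ ⟨w, hxw, hwz⟩
    exact ⟨htS, (x₀, w), hxw, z, hxz, hwz⟩

include hS hrad hres he in
lemma pairStab_eq {s : Set (X × X)} {x y : X} (hs : s ∈ S) (hxy : (x, y) ∈ s) :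
    pairStab S T x y = Lset S s := by
  ext t
  constructor
  · rintro ⟨htT, hall⟩
    have h := hall s hs hxy
    rw [(thin_cprod_left hS hrad he htT hs).2] at h
    exact (mem_L_iff hS hrad he hs htT).2 (Set.singleton_eq_singleton_iff.1 h)
  · intro htL
    have htT : t ∈ T := Lset_sub_T hS hres hs htL
    refine ⟨htT, fun s' hs' hxy' => ?_⟩
    have hss : s' = s := rel_eq hS hs' hs hxy' hxy
    subst hss
    rw [(thin_cprod_left hS hrad he htT hs).2,
      (mem_L_iff hS hrad he hs htT).1 htL]

include hS hrad he in
lemma diag_mem_T : diagRel X ∈ T := he.2.2.2.1 ▸ he.1 0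

include hS hrad he in
lemma L_diag_mem {s : Set (X × X)} (hs : s ∈ S) : diagRel X ∈ Lset S s :=
  (mem_L_iff hS hrad he hs (diag_mem_T hS hrad he)).2 (diag_rcomp s)

include hS hrad hres he in
lemma L_rcomp_mem {s t t' : Set (X × X)} (hs : s ∈ S) (ht : t ∈ Lset S s)
    (ht' : t' ∈ Lset S s) : rcomp t t' ∈ Lset S s := by
  obtain ⟨a, rfl⟩ := he.2.2.1 t (Lset_sub_T hS hres hs ht)
  obtain ⟨b, rfl⟩ := he.2.2.1 t' (Lset_sub_T hS hres hs ht')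
  rw [e_rcomp hS hrad he]
  refine (mem_L_iff hS hrad he hs (he.1 (a + b))).2 ?_
  rw [← e_rcomp hS hrad he, rcomp_assoc,
    (mem_L_iff hS hrad he hs (he.1 b)).1 ht',
    (mem_L_iff hS hrad he hs (he.1 a)).1 ht]

include hS hrad hres he in
lemma L_conv_mem {s t : Set (X × X)} (hs : s ∈ S) (ht : t ∈ Lset S s) :
    conv t ∈ Lset S s := by
  obtain ⟨a, rfl⟩ := he.2.2.1 t (Lset_sub_T hS hres hs ht)
  rw [conv_e hS hrad he]
  refine (mem_L_iff hS hrad he hs (he.1 (-a))).2 ?_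
  conv_lhs => rw [← (mem_L_iff hS hrad he hs (he.1 a)).1 ht]
  rw [← rcomp_assoc, e_rcomp hS hrad he, neg_add_cancel, he.2.2.2.1, diag_rcomp]

end Geometry

section Counting

variable {X : Type*} [Fintype X] {S T : Set (Set (X × X))} {p : ℕ}
  {e : ZMod p × ZMod p → Set (X × X)}
  (hS : IsScheme S) (hrad : thinRadical S = T) (hres : thinResidue S = T)
  (he : IsoElemAb S T p e)

include hS hrad hres he in
lemma R_rcomp_eq {s t : Set (X × X)} (hs : s ∈ S) (ht : t ∈ cprod S {conv s} {s}) :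
    rcomp s t = s := by
  have hcsS : conv s ∈ S := hS.2.2.2.1 s hs
  have htL : t ∈ Lset S (conv s) := ht
  have htc : conv t ∈ Lset S (conv s) := L_conv_mem hS hrad hres he hcsS htL
  have htT : conv t ∈ T := Lset_sub_T hS hres hcsS htc
  have h := (mem_L_iff hS hrad he hcsS htT).1 htc
  have h2 := congrArg conv h
  rwa [conv_rcomp, conv_conv, conv_conv] at h2

include hS hrad hres he in
lemma card_row_eq_card_R {s : Set (X × X)} (hs : s ∈ S) {x z₀ : X} (h : (x, z₀) ∈ s) :
    Nat.card {z | (x, z) ∈ s} = Nat.card (cprod S {conv s} {s}) := by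
  have hcsS : conv s ∈ S := hS.2.2.2.1 s hs
  have hg : ∀ z : {z | (x, z) ∈ s}, relOf hS z₀ z.1 ∈ cprod S {conv s} {s} := by
    intro z
    rw [mem_cprod_iff hS hcsS hs]
    exact ⟨relOf_mem hS z₀ z.1, (z₀, z.1), mem_relOf hS z₀ z.1, x, h, z.2⟩
  refine Nat.card_eq_of_bijective (fun z => ⟨relOf hS z₀ z.1, hg z⟩) ⟨?_, ?_⟩
  · intro z z' hzz
    have heq : relOf hS z₀ z.1 = relOf hS z₀ z'.1 := congrArg Subtype.val hzz
    have h1 : (z₀, z.1) ∈ relOf hS z₀ z'.1 := heq ▸ mem_relOf hS z₀ z.1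
    have htT : relOf hS z₀ z'.1 ∈ T := Rset_sub_T hS hres hs (hg z')
    exact Subtype.ext (t_fun hS hrad he htT h1 (mem_relOf hS z₀ z'.1))
  · rintro ⟨t, htR⟩
    have htS : t ∈ S := (Rset_sub_T hS hres hs htR : t ∈ T) |> hTS hS hrad he
    obtain ⟨w, hw⟩ := row_nonempty hS htS z₀
    have hxw : (x, w) ∈ s := by
      rw [← R_rcomp_eq hS hrad hres he hs htR]
      exact ⟨z₀, h, hw⟩
    exact ⟨⟨w, hxw⟩, Subtype.ext (relOf_eq hS htS hw)⟩

include hS in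
lemma card_rel_eq {s : Set (X × X)} (hs : s ∈ S) :
    Nat.card s = Fintype.card X * nval s := by
  have E : s ≃ Σ x : X, {y | (x, y) ∈ s} :=
    { toFun := fun q => ⟨q.1.1, ⟨q.1.2, q.2⟩⟩
      invFun := fun q => ⟨(q.1, q.2.1), q.2.2⟩
      left_inv := by rintro ⟨⟨a, b⟩, hq⟩; rfl
      right_inv := by rintro ⟨a, b, hq⟩; rfl }
  rw [Nat.card_congr E]
  rw [Nat.card_eq_fintype_card, Fintype.card_sigma]
  have : ∀ x : X, Fintype.card {y | (x, y) ∈ s} = nval s := by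
    intro x
    rw [← Nat.card_eq_fintype_card, ← nval_eq_row hS hs x]
  simp only [this, Finset.sum_const, Finset.card_univ, smul_eq_mul]

include hS in
lemma card_conv_eq {s : Set (X × X)} : Nat.card (conv s) = Nat.card s := by
  refine Nat.card_congr
    { toFun := fun q => ⟨(q.1.2, q.1.1), q.2⟩
      invFun := fun q => ⟨(q.1.2, q.1.1), q.2⟩
      left_inv := by rintro ⟨⟨a, b⟩, hq⟩; rfl
      right_inv := by rintro ⟨⟨a, b⟩, hq⟩; rfl }

include hS in
lemma nval_conv {s : Set (X × X)} (hs : s ∈ S) : nval (conv s) = nval s := by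
  have h1 := card_rel_eq hS hs
  have h2 := card_rel_eq hS (hS.2.2.2.1 s hs)
  rw [card_conv_eq hS, h1] at h2
  have hpos : 0 < Fintype.card X := @Fintype.card_pos X _ (nonempty_X hS)
  exact (Nat.eq_of_mul_eq_mul_left hpos h2.symm)

include hS hrad hres he in
lemma card_R_eq_nval {s : Set (X × X)} (hs : s ∈ S) :
    Nat.card (cprod S {conv s} {s}) = nval s := by
  obtain ⟨x⟩ := nonempty_X hS
  obtain ⟨z₀, hz₀⟩ := row_nonempty hS hs x
  rw [← card_row_eq_card_R hS hrad hres he hs hz₀, ← nval_eq_row hS hs x]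

include hS hrad hres he in
lemma card_L_eq_nval {s : Set (X × X)} (hs : s ∈ S) :
    Nat.card (Lset S s) = nval s := by
  have h : Lset S s = cprod S {conv (conv s)} {conv s} := rfl
  rw [h, card_R_eq_nval hS hrad hres he (hS.2.2.2.1 s hs), nval_conv hS hs]

include hS hrad hres he in
lemma card_L_eq_card_R {s : Set (X × X)} (hs : s ∈ S) :
    Nat.card (Lset S s) = Nat.card (cprod S {conv s} {s}) := by
  rw [card_L_eq_nval hS hrad hres he hs, card_R_eq_nval hS hrad hres he hs]

include hS hrad hres he in
/-- If `L(v)` is trivial then `v` is thin, hence in `T`. -/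
lemma mem_T_of_L_trivial {v : Set (X × X)} (hv : v ∈ S) (h : Lset S v = {diagRel X}) :
    v ∈ T := by
  have h1 : Nat.card (Lset S v) = 1 := by rw [h]; simp
  rw [card_L_eq_nval hS hrad hres he hv] at h1
  have hconvS : conv v ∈ S := hS.2.2.2.1 v hv
  have : conv v ∈ thinRadical S := ⟨hconvS, by rwa [nval_conv hS hv]⟩
  have : conv v ∈ T := hrad ▸ this
  have h2 : conv (conv v) ∈ T := conv_mem_T hS hrad he this
  rwa [conv_conv] at h2

end Counting

section ZModCount

variable {p : ℕ}

/-- A finite, nonempty, addition-closed subset of `(ZMod p)²` is a subgroup. -/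
def mkSub (hp : p.Prime) (V : Set (ZMod p × ZMod p)) (h0 : (0 : ZMod p × ZMod p) ∈ V)
    (hadd : ∀ a ∈ V, ∀ b ∈ V, a + b ∈ V) : AddSubgroup (ZMod p × ZMod p) where
  carrier := V
  zero_mem' := h0
  add_mem' := fun ha hb => hadd _ ha _ hb
  neg_mem' := by
    intro a ha
    haveI : Fact p.Prime := ⟨hp⟩
    have hns : ∀ n : ℕ, n • a ∈ V := by
      intro n
      induction n with
      | zero => simpa using h0
      | succ n ih =>
        rw [succ_nsmul]
        exact hadd _ ih _ ha
    have hp1 : 1 ≤ p := hp.one_lt.le.trans' (by norm_num)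
    have hpa : p • a = 0 := by ext <;> simp [nsmul_eq_mul, ZMod.natCast_self]
    have heq : (p - 1) • a + a = 0 := by
      rw [← succ_nsmul, Nat.sub_add_cancel hp1, hpa]
    have : -a = (p - 1) • a := by
      rw [neg_eq_iff_add_eq_zero, add_comm]; exact heq
    rw [this]
    exact hns (p - 1)

@[simp] lemma mkSub_coe (hp : p.Prime) (V : Set (ZMod p × ZMod p)) (h0) (hadd) :
    ((mkSub hp V h0 hadd : AddSubgroup (ZMod p × ZMod p)) : Set (ZMod p × ZMod p)) = V := rfl

lemma card_zmod_sq (hp : p.Prime) : Nat.card (ZMod p × ZMod p) = p ^ 2 := by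
  haveI : Fact p.Prime := ⟨hp⟩
  rw [Nat.card_eq_fintype_card, Fintype.card_prod, ZMod.card, sq]

lemma card_sub_cases (hp : p.Prime) (V : AddSubgroup (ZMod p × ZMod p)) :
    Nat.card V = 1 ∨ Nat.card V = p ∨ Nat.card V = p ^ 2 := by
  haveI : Fact p.Prime := ⟨hp⟩
  have hdvd : Nat.card V ∣ p ^ 2 := by
    rw [← card_zmod_sq hp]
    exact AddSubgroup.card_addSubgroup_dvd_card V
  obtain ⟨k, hk, hkk⟩ := (Nat.dvd_prime_pow hp).1 hdvd
  interval_cases k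
  · left; simpa using hkk
  · right; left; simpa using hkk
  · right; right; exact hkk

/-- The vertical axis subgroup. -/
def vertSub (p : ℕ) : AddSubgroup (ZMod p × ZMod p) where
  carrier := {v | v.1 = 0}
  zero_mem' := rfl
  add_mem' := by
    intro a b ha hb
    simp only [Set.mem_setOf_eq] at *
    rw [Prod.fst_add, ha, hb, add_zero]
  neg_mem' := by
    intro a ha
    simp only [Set.mem_setOf_eq] at *
    rw [Prod.fst_neg, ha, neg_zero]

lemma card_vertSub (hp : p.Prime) : Nat.card (vertSub p) = p := by
  haveI : Fact p.Prime := ⟨hp⟩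
  have E : vertSub p ≃ ZMod p :=
    { toFun := fun q => q.1.2
      invFun := fun y => ⟨(0, y), rfl⟩
      left_inv := by
        rintro ⟨⟨a, b⟩, hq⟩
        have : a = 0 := hq
        subst this; rfl
      right_inv := fun y => rfl }
  rw [Nat.card_congr E, Nat.card_zmod]

lemma sub_eq_of_le_of_card (hp : p.Prime) {V W : AddSubgroup (ZMod p × ZMod p)}
    (h : V ≤ W) (hc : Nat.card W ≤ Nat.card V) : V = W := by
  haveI : Fact p.Prime := ⟨hp⟩
  refine SetLike.ext' (Set.eq_of_subset_of_ncard_le h ?_ (Set.toFinite _))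
  rwa [← Nat.card_coe_set_eq, ← Nat.card_coe_set_eq]

lemma sub_eq_of_card_p_of_mem (hp : p.Prime) {V W : AddSubgroup (ZMod p × ZMod p)}
    (hV : Nat.card V = p) (hW : Nat.card W = p) {v : ZMod p × ZMod p}
    (hv0 : v ≠ 0) (hvV : v ∈ V) (hvW : v ∈ W) : V = W := by
  haveI : Fact p.Prime := ⟨hp⟩
  have key : ∀ U : AddSubgroup (ZMod p × ZMod p), Nat.card U = p → v ∈ U →
      AddSubgroup.zmultiples v = U := by
    intro U hU hvU
    have hle : AddSubgroup.zmultiples v ≤ U := AddSubgroup.zmultiples_le.2 hvU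
    have hdvd : Nat.card (AddSubgroup.zmultiples v) ∣ p ^ 2 := by
      rw [← card_zmod_sq hp]
      exact AddSubgroup.card_addSubgroup_dvd_card _
    have hle2 : Nat.card (AddSubgroup.zmultiples v) ≤ p :=
      le_trans (Nat.card_le_card_of_injective _ (AddSubgroup.inclusion_injective hle))
        (le_of_eq hU)
    have hne1 : Nat.card (AddSubgroup.zmultiples v) ≠ 1 := by
      intro h1
      have : AddSubgroup.zmultiples v = ⊥ := AddSubgroup.card_eq_one.1 h1
      have hv : v ∈ (⊥ : AddSubgroup (ZMod p × ZMod p)) := this ▸ AddSubgroup.mem_zmultiples v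
      exact hv0 (AddSubgroup.mem_bot.1 hv)
    have hcard : Nat.card (AddSubgroup.zmultiples v) = p := by
      obtain ⟨k, hk, hkk⟩ := (Nat.dvd_prime_pow hp).1 hdvd
      interval_cases k
      · rw [pow_zero] at hkk; exact absurd hkk hne1
      · rwa [pow_one] at hkk
      · rw [hkk] at hle2
        have := hp.one_lt
        nlinarith
    exact sub_eq_of_le_of_card hp hle (by rw [hU, hcard])
  exact (key V hV hvV).symm.trans (key W hW hvW)

lemma vert_eq_of_no_one (hp : p.Prime) {V : AddSubgroup (ZMod p × ZMod p)}
    (hV : Nat.card V = p) (h : ¬ ∃ m, ((1 : ZMod p), m) ∈ V) : V = vertSub p := by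
  haveI : Fact p.Prime := ⟨hp⟩
  have hle : V ≤ vertSub p := by
    rintro ⟨a, b⟩ hab
    by_contra hne
    have ha : a ≠ 0 := hne
    set n : ℕ := (a⁻¹ : ZMod p).val with hn
    have hcast : ((n : ℕ) : ZMod p) = a⁻¹ := ZMod.natCast_rightInverse a⁻¹
    have hmem : n • ((a, b) : ZMod p × ZMod p) ∈ V := AddSubgroup.nsmul_mem V hab n
    have : n • ((a, b) : ZMod p × ZMod p) = (1, (n : ZMod p) * b) := by
      ext
      · show n • a = 1
        rw [nsmul_eq_mul, hcast, inv_mul_cancel₀ ha]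
      · show n • b = (n : ZMod p) * b
        rw [nsmul_eq_mul]
    exact h ⟨(n : ZMod p) * b, by rwa [this] at hmem⟩
  exact sub_eq_of_le_of_card hp hle (by rw [hV, card_vertSub hp])

end ZModCount

section MBridge

variable {X : Type*} [Fintype X] {S T : Set (Set (X × X))} {p : ℕ}
  {e : ZMod p × ZMod p → Set (X × X)}
  (hS : IsScheme S) (hrad : thinRadical S = T) (hres : thinResidue S = T)
  (he : IsoElemAb S T p e) (hp : p.Prime)

lemma dvd_p_sq_eq (hp : p.Prime) {d : ℕ} (hdvd : d ∣ p ^ 2) (hle : d ≤ p) (hne : d ≠ 1) :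
    d = p := by
  obtain ⟨k, hk, hkk⟩ := (Nat.dvd_prime_pow hp).1 hdvd
  interval_cases k
  · rw [pow_zero] at hkk; exact absurd hkk hne
  · rwa [pow_one] at hkk
  · rw [hkk] at hle; have := hp.one_lt; nlinarith

include he in
lemma range_e : Set.range e = T := by
  apply subset_antisymm
  · rintro t ⟨a, rfl⟩; exact he.1 a
  · intro t ht; obtain ⟨a, rfl⟩ := he.2.2.1 t ht; exact ⟨a, rfl⟩

include he in
lemma M_image {M : Set (Set (X × X))} (hMT : M ⊆ T) : e '' (e ⁻¹' M) = M := by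
  apply subset_antisymm
  · rintro m ⟨a, ha, rfl⟩; exact ha
  · intro m hm
    obtain ⟨a, rfl⟩ := he.2.2.1 m (hMT hm)
    exact ⟨a, hm, rfl⟩

include he in
lemma card_M_eq_card_pre {M : Set (Set (X × X))} (hMT : M ⊆ T) :
    Nat.card M = Nat.card (e ⁻¹' M) := by
  rw [Nat.card_coe_set_eq, Nat.card_coe_set_eq]
  conv_lhs => rw [← M_image he hMT]
  rw [Set.ncard_image_of_injective _ he.2.1]

include hS he in
lemma closedSub_add {M : Set (Set (X × X))} (hM : IsClosedSub S M)
    (a b : ZMod p × ZMod p) (ha : e a ∈ M) (hb : e b ∈ M) : e (a + b) ∈ M := by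
  have hmem : e (a + b) ∈ cprod S {e a} {e b} := by rw [he.2.2.2.2]; rfl
  exact hM.2.2 (cprod_mono hS (Set.singleton_subset_iff.2 ha)
    (Set.singleton_subset_iff.2 hb) hmem)

include hS hrad hres he in
lemma Lset_add {s : Set (X × X)} (hs : s ∈ S) (a b : ZMod p × ZMod p)
    (ha : e a ∈ Lset S s) (hb : e b ∈ Lset S s) : e (a + b) ∈ Lset S s := by
  rw [← e_rcomp hS hrad he]
  exact L_rcomp_mem hS hrad hres he hs ha hb

include hS hrad hres he hp in
lemma M_eq_of_sub {M₁ M₂ : Set (Set (X × X))} (hM₁T : M₁ ⊆ T) (hM₂T : M₂ ⊆ T)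
    (h0₁ : diagRel X ∈ M₁) (hadd₁ : ∀ a b, e a ∈ M₁ → e b ∈ M₁ → e (a + b) ∈ M₁)
    (h0₂ : diagRel X ∈ M₂) (hadd₂ : ∀ a b, e a ∈ M₂ → e b ∈ M₂ → e (a + b) ∈ M₂)
    (hsub : M₁ ⊆ M₂) (hne : M₁ ≠ {diagRel X}) (hcard : Nat.card M₂ = p) : M₁ = M₂ := by
  have h0₁' : (0 : ZMod p × ZMod p) ∈ e ⁻¹' M₁ := by
    simp only [Set.mem_preimage, he.2.2.2.1]; exact h0₁
  have h0₂' : (0 : ZMod p × ZMod p) ∈ e ⁻¹' M₂ := by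
    simp only [Set.mem_preimage, he.2.2.2.1]; exact h0₂
  set V₁ := mkSub hp (e ⁻¹' M₁) h0₁' (fun a ha b hb => hadd₁ a b ha hb) with hV₁
  set V₂ := mkSub hp (e ⁻¹' M₂) h0₂' (fun a ha b hb => hadd₂ a b ha hb) with hV₂
  have hle : V₁ ≤ V₂ := fun v hv => hsub hv
  haveI : Fact p.Prime := ⟨hp⟩
  have hcV₂ : Nat.card V₂ = p := by
    have h' : Nat.card V₂ = Nat.card (e ⁻¹' M₂) := rfl
    rw [h', ← card_M_eq_card_pre he hM₂T]; exact hcard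
  have hcV₁dvd : Nat.card V₁ ∣ p ^ 2 := by
    rw [← card_zmod_sq hp]
    exact AddSubgroup.card_addSubgroup_dvd_card V₁
  have hcV₁le : Nat.card V₁ ≤ p :=
    le_trans (Nat.card_le_card_of_injective _ (AddSubgroup.inclusion_injective hle))
      (le_of_eq hcV₂)
  have hcV₁ne : Nat.card V₁ ≠ 1 := by
    intro h1
    have hbot : V₁ = ⊥ := AddSubgroup.card_eq_one.1 h1
    apply hne
    have hcar : e ⁻¹' M₁ = {0} := by
      rw [← AddSubgroup.coe_bot (G := ZMod p × ZMod p), ← hbot]; rfl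
    conv_lhs => rw [← M_image he hM₁T, hcar]
    rw [Set.image_singleton, he.2.2.2.1]
  have hcV₁ : Nat.card V₁ = p := dvd_p_sq_eq hp hcV₁dvd hcV₁le hcV₁ne
  have hVeq : V₁ = V₂ := sub_eq_of_le_of_card hp hle (by rw [hcV₂, hcV₁])
  have hcar : e ⁻¹' M₁ = e ⁻¹' M₂ := SetLike.ext'_iff.1 hVeq
  conv_lhs => rw [← M_image he hM₁T]
  conv_rhs => rw [← M_image he hM₂T]
  rw [hcar]

include hS hrad hres he hp in
lemma card_M_p {M : Set (Set (X × X))} (hM : IsClosedSub S M) (hMT : M ⊆ T)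
    (h1 : M ≠ {diagRel X}) (h2 : M ≠ T) : Nat.card M = p := by
  have h0 : diagRel X ∈ M := diag_mem_closed hS hM
  have hadd := closedSub_add hS he hM
  have h0' : (0 : ZMod p × ZMod p) ∈ e ⁻¹' M := by
    simp only [Set.mem_preimage, he.2.2.2.1]; exact h0
  set V := mkSub hp (e ⁻¹' M) h0' (fun a ha b hb => hadd a b ha hb) with hV
  haveI : Fact p.Prime := ⟨hp⟩
  have hcards : Nat.card M = Nat.card V := by
    rw [card_M_eq_card_pre he hMT]; rfl
  rcases card_sub_cases hp V with hc | hc | hc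
  · exfalso
    apply h1
    have hbot : V = ⊥ := AddSubgroup.card_eq_one.1 hc
    have hcar : e ⁻¹' M = {0} := by
      rw [← AddSubgroup.coe_bot (G := ZMod p × ZMod p), ← hbot]; rfl
    conv_lhs => rw [← M_image he hMT, hcar]
    rw [Set.image_singleton, he.2.2.2.1]
  · rw [hcards, hc]
  · exfalso
    apply h2
    have htop : V = ⊤ := AddSubgroup.eq_top_of_card_eq V (by rw [hc, card_zmod_sq hp])
    have hcar : e ⁻¹' M = Set.univ := by
      rw [← AddSubgroup.coe_top (G := ZMod p × ZMod p), ← htop]; rfl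
    conv_lhs => rw [← M_image he hMT, hcar, Set.image_univ, range_e he]

include hS hrad hres he hp in
lemma L_eq_of_sub {v s₂ : Set (X × X)} (hv : v ∈ S) (hvT : v ∉ T) (hs₂ : s₂ ∈ S)
    (hcard : Nat.card (Lset S s₂) = p) (hsub : Lset S v ⊆ Lset S s₂) :
    Lset S v = Lset S s₂ := by
  refine M_eq_of_sub hS hrad hres he hp (Lset_sub_T hS hres hv) (Lset_sub_T hS hres hs₂)
    (L_diag_mem hS hrad he hv) (Lset_add hS hrad hres he hv)
    (L_diag_mem hS hrad he hs₂) (Lset_add hS hrad hres he hs₂) hsub ?_ hcard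
  intro htriv
  exact hvT (mem_T_of_L_trivial hS hrad hres he hv htriv)

end MBridge

section Cosets

variable {X : Type*} [Fintype X] {S T : Set (Set (X × X))} {p : ℕ}
  {e : ZMod p × ZMod p → Set (X × X)}
  (hS : IsScheme S) (hrad : thinRadical S = T) (hres : thinResidue S = T)
  (he : IsoElemAb S T p e)

include he in
lemma mem_coset_iff {x y : X} : y ∈ coset T x ↔ ∃ a, (x, y) ∈ e a := by
  constructor
  · rintro ⟨t, ht, hxy⟩
    obtain ⟨a, rfl⟩ := he.2.2.1 t ht
    exact ⟨a, hxy⟩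
  · rintro ⟨a, ha⟩
    exact ⟨e a, he.1 a, ha⟩

include hS hrad he in
lemma coset_self (x : X) : x ∈ coset T x := ⟨diagRel X, diag_mem_T hS hrad he, rfl⟩

include hS hrad he in
lemma coset_eq_of_rel {x y : X} {a : ZMod p × ZMod p} (h : (x, y) ∈ e a) :
    coset T x = coset T y := by
  have hyx : (y, x) ∈ e (-a) := by
    rw [← conv_e hS hrad he]; exact h
  ext z
  rw [mem_coset_iff he, mem_coset_iff he]
  constructor
  · rintro ⟨b, hb⟩
    refine ⟨-a + b, ?_⟩
    rw [← e_rcomp hS hrad he]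
    exact ⟨x, hyx, hb⟩
  · rintro ⟨c, hc⟩
    refine ⟨a + c, ?_⟩
    rw [← e_rcomp hS hrad he]
    exact ⟨y, h, hc⟩

include hS hrad he in
lemma rel_of_coset_eq {x y : X} (h : coset T x = coset T y) : ∃ a, (x, y) ∈ e a := by
  have : y ∈ coset T x := h ▸ coset_self hS hrad he y
  exact (mem_coset_iff he).1 this

include hS hrad he in
lemma e_conj_meets (c d : ZMod p × ZMod p) (A : Set (X × X)) :
    (e c ∩ rcomp (e d) (rcomp A (e (-d)))).Nonempty ↔ (e c ∩ A).Nonempty := by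
  constructor
  · rintro ⟨⟨u, v⟩, huv, w, hw1, w', hw2, hw3⟩
    refine ⟨(w, w'), ?_, hw2⟩
    have hwu : (w, u) ∈ e (-d) := by rw [← conv_e hS hrad he]; exact hw1
    have hvw' : (v, w') ∈ e d := by
      have : (v, w') ∈ conv (e (-d)) := hw3
      rwa [conv_e hS hrad he, neg_neg] at this
    have h1 : (w, w') ∈ rcomp (e (-d)) (rcomp (e c) (e d)) := ⟨u, hwu, v, huv, hvw'⟩
    rwa [e_rcomp hS hrad he, add_comm c d, e_rcomp hS hrad he, neg_add_cancel_left] at h1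
  · rintro ⟨⟨w, w'⟩, hww, hA⟩
    obtain ⟨u', hu'⟩ := row_nonempty hS (hTS hS hrad he (he.1 (-d))) w
    have hud : (u', w) ∈ e d := by
      have : (u', w) ∈ conv (e (-d)) := hu'
      rwa [conv_e hS hrad he, neg_neg] at this
    obtain ⟨v, hv⟩ := row_nonempty hS (hTS hS hrad he (he.1 (-d))) w'
    refine ⟨(u', v), ?_, w, hud, w', hA, hv⟩
    have h1 : (u', v) ∈ rcomp (e d) (rcomp (e c) (e (-d))) := ⟨w, hud, w', hww, hv⟩
    have h2 : d + (c + -d) = c := by ring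
    rwa [e_rcomp hS hrad he, e_rcomp hS hrad he, h2] at h1

include hS hrad hres he in
lemma pairStab_eq_relOf (x y : X) :
    pairStab S T x y = Lset S (relOf hS x y) :=
  pairStab_eq hS hrad hres he (relOf_mem hS x y) (mem_relOf hS x y)

include hS hrad hres he in
lemma pairStab_rep {x y x' y' : X} (hx : coset T x = coset T x')
    (hy : coset T y = coset T y') : pairStab S T x y = pairStab S T x' y' := by
  obtain ⟨a, ha⟩ := rel_of_coset_eq hS hrad he hx.symm
  obtain ⟨b, hb⟩ := rel_of_coset_eq hS hrad he hy
  set s := relOf hS x y with hs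
  have hsS : s ∈ S := relOf_mem hS x y
  have hsb : rcomp s (e b) ∈ S := (thin_cprod_right hS hrad he hsS (he.1 b)).1
  set s' := rcomp (e a) (rcomp s (e b)) with hs'
  have hs'S : s' ∈ S := (thin_cprod_left hS hrad he (he.1 a) hsb).1
  have hx'y' : (x', y') ∈ s' := ⟨x, ha, y, mem_relOf hS x y, hb⟩
  rw [pairStab_eq hS hrad hres he hs'S hx'y', pairStab_eq hS hrad hres he hsS (mem_relOf hS x y)]
  -- compute s' ∘ (s')*
  have hconv : conv s' = rcomp (rcomp (e (-b)) (conv s)) (e (-a)) := by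
    rw [hs', conv_rcomp, conv_rcomp, conv_e hS hrad he, conv_e hS hrad he]
  have hcomp : rcomp s' (conv s') = rcomp (e a) (rcomp (rcomp s (conv s)) (e (-a))) := by
    rw [hconv, hs']
    simp only [rcomp_assoc]
    rw [← rcomp_assoc (e b) (e (-b)), e_rcomp hS hrad he, add_neg_cancel, he.2.2.2.1,
      diag_rcomp]
  ext t
  constructor
  · intro ht
    have htT : t ∈ T := Lset_sub_T hS hres hsS ht
    obtain ⟨c, rfl⟩ := he.2.2.1 t htT
    rw [Lset, mem_cprod_iff hS hsS (hS.2.2.2.1 s hsS)] at ht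
    rw [Lset, mem_cprod_iff hS hs'S (hS.2.2.2.1 s' hs'S)]
    refine ⟨ht.1, ?_⟩
    rw [hcomp]
    exact (e_conj_meets hS hrad he c a _).2 ht.2
  · intro ht
    have htT : t ∈ T := Lset_sub_T hS hres hs'S ht
    obtain ⟨c, rfl⟩ := he.2.2.1 t htT
    rw [Lset, mem_cprod_iff hS hs'S (hS.2.2.2.1 s' hs'S)] at ht
    rw [Lset, mem_cprod_iff hS hsS (hS.2.2.2.1 s hsS)]
    refine ⟨ht.1, ?_⟩
    have := ht.2
    rw [hcomp] at this
    exact (e_conj_meets hS hrad he c a _).1 this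

include hS hrad hres he in
lemma lineOf_rep {x x' : X} (hx : coset T x = coset T x') (M : Set (Set (X × X))) :
    lineOf S T x M = lineOf S T x' M := by
  unfold lineOf
  rw [hx]
  congr 1
  ext C
  constructor
  · rintro ⟨y, rfl, hne, hstab⟩
    exact ⟨y, rfl, hx ▸ hne, (pairStab_rep hS hrad hres he hx rfl).symm ▸ hstab⟩
  · rintro ⟨y, rfl, hne, hstab⟩
    exact ⟨y, rfl, hx.symm ▸ hne, (pairStab_rep hS hrad hres he hx rfl) ▸ hstab⟩

end Cosets

section MainGeo

variable {X : Type*} [Fintype X] {S T : Set (Set (X × X))} {p : ℕ}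
  {e : ZMod p × ZMod p → Set (X × X)}
  (hS : IsScheme S) (hrad : thinRadical S = T) (hres : thinResidue S = T)
  (he : IsoElemAb S T p e)

include hS in
lemma conv_relOf (x y : X) : conv (relOf hS x y) = relOf hS y x := by
  refine rel_eq hS (hS.2.2.2.1 _ (relOf_mem hS x y)) (relOf_mem hS y x) ?_ (mem_relOf hS y x)
  exact mem_relOf hS x y

include hS hrad hres he in
lemma card_L_conv {s : Set (X × X)} (hs : s ∈ S) :
    Nat.card (Lset S (conv s)) = Nat.card (Lset S s) := by
  rw [card_L_eq_nval hS hrad hres he (hS.2.2.2.1 s hs), nval_conv hS hs,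
    card_L_eq_nval hS hrad hres he hs]

include hS hrad hres he in
lemma notMem_T_of_coset_ne {y z : X} (h : coset T y ≠ coset T z) :
    relOf hS y z ∉ T := by
  intro hvT
  obtain ⟨a, ha⟩ := he.2.2.1 _ hvT
  exact h (coset_eq_of_rel hS hrad he (ha ▸ mem_relOf hS y z))

include hS hrad hres he in
lemma lemA (hp : p.Prime) {x y z : X} {s u : Set (X × X)} (hs : s ∈ S) (hu : u ∈ S)
    (hxy : (x, y) ∈ s) (hxz : (x, z) ∈ u) (hL : Lset S s = Lset S u)
    (hcoset : coset T y ≠ coset T z) (hcard : Nat.card (Lset S s) = p) :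
    Lset S (relOf hS y z) = Lset S (conv s) := by
  set v := relOf hS y z with hv
  have hvS : v ∈ S := relOf_mem hS y z
  have hvT : v ∉ T := notMem_T_of_coset_ne hS hrad hres he hcoset
  have hcsS : conv s ∈ S := hS.2.2.2.1 s hs
  have hvmem : v ∈ cprod S {conv s} {u} := by
    rw [mem_cprod_iff hS hcsS hu]
    exact ⟨hvS, (y, z), mem_relOf hS y z, x, hxy, hxz⟩
  have hsub : v ⊆ rcomp (conv s) u := cprod_singleton_subset_rcomp hS hcsS hu hvmem
  have hkey : rcomp v (conv v) ⊆ rcomp (conv s) s := by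
    rintro ⟨α, β⟩ ⟨γ, hαγ, hβγ⟩
    obtain ⟨δ, hδα, hδγ⟩ := hsub hαγ
    obtain ⟨ε, hεβ, hεγ⟩ := hsub (hβγ : (β, γ) ∈ v)
    set m := relOf hS δ ε with hm
    have hmL : m ∈ Lset S u := by
      rw [Lset, mem_cprod_iff hS hu (hS.2.2.2.1 u hu)]
      exact ⟨relOf_mem hS δ ε, (δ, ε), mem_relOf hS δ ε, γ, hδγ, hεγ⟩
    have hmLs : m ∈ Lset S s := by rw [hL]; exact hmL
    have hmT : m ∈ T := Lset_sub_T hS hres hs hmLs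
    have hms : rcomp m s = s := (mem_L_iff hS hrad he hs hmT).1 hmLs
    have hδβ : (δ, β) ∈ s := by
      rw [← hms]
      exact ⟨ε, mem_relOf hS δ ε, (hεβ : (ε, β) ∈ s)⟩
    exact ⟨δ, hδα, hδβ⟩
  have hLsub : Lset S v ⊆ Lset S (conv s) := by
    intro t htv
    rw [Lset, mem_cprod_iff hS hvS (hS.2.2.2.1 v hvS)] at htv
    obtain ⟨htS, q, hq1, hq2⟩ := htv
    rw [Lset, mem_cprod_iff hS hcsS (hS.2.2.2.1 _ hcsS), conv_conv]
    exact ⟨htS, q, hq1, hkey hq2⟩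
  have hcard' : Nat.card (Lset S (conv s)) = p := by
    rw [card_L_conv hS hrad hres he hs]; exact hcard
  exact L_eq_of_sub hS hrad hres he hp hvS hvT hcsS hcard' hLsub

include hS hrad hres he in
lemma line_rewrite (hp : p.Prime) {x y : X} (hxy : coset T y ≠ coset T x)
    (hcard : Nat.card (pairStab S T x y) = p) :
    lineOf S T x (pairStab S T x y) = lineOf S T y (pairStab S T y x) := by
  have hMeq : pairStab S T x y = Lset S (relOf hS x y) := pairStab_eq_relOf hS hrad hres he x y
  have hM2eq : pairStab S T y x = Lset S (conv (relOf hS x y)) := by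
    rw [conv_relOf hS]; exact pairStab_eq_relOf hS hrad hres he y x
  have hcardL : Nat.card (Lset S (relOf hS x y)) = p := by rw [← hMeq]; exact hcard
  have hcardL2 : Nat.card (Lset S (relOf hS y x)) = p := by
    rw [← conv_relOf hS x y, card_L_conv hS hrad hres he (relOf_mem hS x y)]
    exact hcardL
  ext C
  simp only [lineOf, Set.mem_insert_iff, Set.mem_setOf_eq]
  constructor
  · rintro (rfl | ⟨z, rfl, hne, hMz⟩)
    · exact Or.inr ⟨x, rfl, fun h => hxy h.symm, rfl⟩
    · by_cases hzy : coset T z = coset T y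
      · exact Or.inl hzy
      · refine Or.inr ⟨z, rfl, hzy, ?_⟩
        have hLzu : Lset S (relOf hS x y) = Lset S (relOf hS x z) := by
          rw [← hMeq, ← pairStab_eq_relOf hS hrad hres he x z, hMz]
        have hA := lemA hS hrad hres he hp (relOf_mem hS x y) (relOf_mem hS x z)
          (mem_relOf hS x y) (mem_relOf hS x z) hLzu (fun h => hzy h.symm) hcardL
        rw [pairStab_eq_relOf hS hrad hres he y z, hA, ← hM2eq]
  · rintro (hC | ⟨z, rfl, hne, hM2z⟩)
    · exact Or.inr ⟨y, hC, hxy, rfl⟩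
    · by_cases hzx : coset T z = coset T x
      · exact Or.inl hzx
      · refine Or.inr ⟨z, rfl, hzx, ?_⟩
        have hLzu : Lset S (relOf hS y x) = Lset S (relOf hS y z) := by
          rw [← pairStab_eq_relOf hS hrad hres he y x,
            ← pairStab_eq_relOf hS hrad hres he y z, hM2z]
        have hA := lemA hS hrad hres he hp (relOf_mem hS y x) (relOf_mem hS y z)
          (mem_relOf hS y x) (mem_relOf hS y z) hLzu (fun h => hzx h.symm) hcardL2
        rw [pairStab_eq_relOf hS hrad hres he x z, hA, conv_relOf hS, ← hMeq]

end MainGeo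

section Key

variable {X : Type*} [Fintype X] {S T : Set (Set (X × X))} {p : ℕ}
  {e : ZMod p × ZMod p → Set (X × X)}
  (hS : IsScheme S) (hrad : thinRadical S = T) (hres : thinResidue S = T)
  (he : IsoElemAb S T p e)

include hS hrad hres he in
lemma card_pairStab_symm {x y : X} :
    Nat.card (pairStab S T y x) = Nat.card (pairStab S T x y) := by
  rw [pairStab_eq_relOf hS hrad hres he y x, pairStab_eq_relOf hS hrad hres he x y,
    ← conv_relOf hS x y, card_L_conv hS hrad hres he (relOf_mem hS x y)]

include hS hrad hres he in
lemma key (hp : p.Prime) {x xP xQ : X} {M : Set (Set (X × X))}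
    (hM : IsClosedSub S M) (hMT : M ⊆ T) (h1 : M ≠ {diagRel X}) (h2 : M ≠ T)
    (hPQ : coset T xP ≠ coset T xQ)
    (hPmem : coset T xP ∈ lineOf S T x M) (hQmem : coset T xQ ∈ lineOf S T x M) :
    lineOf S T x M = lineOf S T xP (pairStab S T xP xQ) ∧
      Nat.card (pairStab S T xP xQ) = p := by
  have hcM : Nat.card M = p := card_M_p hS hrad hres he hp hM hMT h1 h2
  rw [lineOf, Set.mem_insert_iff, Set.mem_setOf_eq] at hPmem hQmem
  rcases hPmem with hP1 | ⟨z, hPz, hzx, hMz⟩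
  · -- P is the base point
    rcases hQmem with hQ1 | ⟨w, hQw, hwx, hMw⟩
    · exact absurd (hP1.trans hQ1.symm) hPQ
    · have hstab : pairStab S T xP xQ = M := by
        rw [pairStab_rep hS hrad hres he (x' := x) (y' := w) hP1 hQw]
        exact hMw
      rw [hstab]
      exact ⟨lineOf_rep hS hrad hres he hP1.symm M, hcM⟩
  · -- P is not the base point
    rw [pairStab_rep hS hrad hres he (x' := x) (y' := xP) rfl hPz.symm] at hMz
    have hcPx : Nat.card (pairStab S T x xP) = p := by rw [hMz]; exact hcM
    have hxPx_ne : coset T xP ≠ coset T x := hPz ▸ hzx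
    have hrw : lineOf S T x M = lineOf S T xP (pairStab S T xP x) := by
      rw [← hMz]
      exact line_rewrite hS hrad hres he hp hxPx_ne hcPx
    have hcPxP : Nat.card (pairStab S T xP x) = p := by
      rw [card_pairStab_symm hS hrad hres he]; exact hcPx
    rcases hQmem with hQ1 | ⟨w, hQw, hwx, hMw⟩
    · have hstab : pairStab S T xP xQ = pairStab S T xP x :=
        pairStab_rep hS hrad hres he rfl hQ1
      rw [hstab]
      exact ⟨hrw, hcPxP⟩
    · rw [pairStab_rep hS hrad hres he (x' := x) (y' := xQ) rfl hQw.symm] at hMw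
      have hL : Lset S (relOf hS x xP) = Lset S (relOf hS x xQ) := by
        rw [← pairStab_eq_relOf hS hrad hres he x xP,
          ← pairStab_eq_relOf hS hrad hres he x xQ, hMz, hMw]
      have hcL : Nat.card (Lset S (relOf hS x xP)) = p := by
        rw [← pairStab_eq_relOf hS hrad hres he x xP]; exact hcPx
      have hA := lemA hS hrad hres he hp (relOf_mem hS x xP) (relOf_mem hS x xQ)
        (mem_relOf hS x xP) (mem_relOf hS x xQ) hL hPQ hcL
      have hstab : pairStab S T xP xQ = pairStab S T xP x := by
        rw [pairStab_eq_relOf hS hrad hres he xP xQ, hA, conv_relOf hS,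
          ← pairStab_eq_relOf hS hrad hres he xP x]
      rw [hstab]
      exact ⟨hrw, hcPxP⟩

end Key

end Stmt4Aux

open Stmt4Aux in
/-- If `T = O_θ(S) = O^θ(S) ≅ C_p × C_p`, then the induced incidence structure
on `X/T` is a partial linear space in which every point lies on at most `p + 1` lines. -/
theorem stmt4 {X : Type*} [Fintype X] (p : ℕ) (hp : p.Prime)
    (S T : Set (Set (X × X))) (hS : IsScheme S)
    (hrad : thinRadical S = T) (hres : thinResidue S = T)
    (hiso : ∃ e : ZMod p × ZMod p → Set (X × X), IsoElemAb S T p e) :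
    (∀ ℓ₁ ∈ linesOf S T, ∀ ℓ₂ ∈ linesOf S T, ∀ P ∈ pts T, ∀ Q ∈ pts T, P ≠ Q →
      P ∈ ℓ₁ → Q ∈ ℓ₁ → P ∈ ℓ₂ → Q ∈ ℓ₂ → ℓ₁ = ℓ₂) ∧
    (∀ P ∈ pts T, Nat.card {ℓ ∈ linesOf S T | P ∈ ℓ} ≤ p + 1) := by
  obtain ⟨e, he⟩ := hiso
  haveI : Fact p.Prime := ⟨hp⟩
  constructor
  · rintro ℓ₁ ⟨x₁, M₁, hM₁, hM₁T, h11, h12, rfl, hc₁⟩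
      ℓ₂ ⟨x₂, M₂, hM₂, hM₂T, h21, h22, rfl, hc₂⟩
      P ⟨xP, rfl⟩ Q ⟨xQ, rfl⟩ hPQ hP1 hQ1 hP2 hQ2
    have h1 := (key hS hrad hres he hp hM₁ hM₁T h11 h12 hPQ hP1 hQ1).1
    have h2 := (key hS hrad hres he hp hM₂ hM₂T h21 h22 hPQ hP2 hQ2).1
    rw [h1, h2]
  · rintro P ⟨x₀, rfl⟩
    have hmain : ∀ ℓ ∈ {ℓ | ℓ ∈ linesOf S T ∧ coset T x₀ ∈ ℓ},
        ∃ V : AddSubgroup (ZMod p × ZMod p), Nat.card V = p ∧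
          ℓ = lineOf S T x₀ (e '' (V : Set (ZMod p × ZMod p))) := by
      rintro ℓ ⟨⟨x, M, hM, hMT, h1, h2, rfl, hc2⟩, hPmem⟩
      have hnontriv : ∃ Q ∈ lineOf S T x M, Q ≠ coset T x₀ := by
        by_contra hcon
        push_neg at hcon
        have hsub : lineOf S T x M ⊆ {coset T x₀} := fun Q hQ => hcon Q hQ
        have hle : Nat.card (lineOf S T x M) ≤ 1 := by
          rw [Nat.card_coe_set_eq]
          calc (lineOf S T x M).ncard ≤ ({coset T x₀} : Set (Set X)).ncard :=
                Set.ncard_le_ncard hsub (Set.finite_singleton _)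
            _ = 1 := Set.ncard_singleton _
        omega
      obtain ⟨Q, hQmem, hQne⟩ := hnontriv
      have hq : ∃ xQ, Q = coset T xQ := by
        rw [lineOf, Set.mem_insert_iff, Set.mem_setOf_eq] at hQmem
        rcases hQmem with h | ⟨z, hz, -, -⟩
        · exact ⟨x, h⟩
        · exact ⟨z, hz⟩
      obtain ⟨xQ, rfl⟩ := hq
      have hPQ : coset T x₀ ≠ coset T xQ := fun h => hQne h.symm
      obtain ⟨hline, hcardM'⟩ := key hS hrad hres he hp hM hMT h1 h2 hPQ hPmem hQmem
      have hM'L : pairStab S T x₀ xQ = Lset S (relOf hS x₀ xQ) :=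
        pairStab_eq_relOf hS hrad hres he x₀ xQ
      have hM'T : pairStab S T x₀ xQ ⊆ T := by
        rw [hM'L]; exact Lset_sub_T hS hres (relOf_mem hS x₀ xQ)
      have h0' : (0 : ZMod p × ZMod p) ∈ e ⁻¹' pairStab S T x₀ xQ := by
        simp only [Set.mem_preimage, he.2.2.2.1]
        rw [hM'L]
        exact L_diag_mem hS hrad he (relOf_mem hS x₀ xQ)
      have hadd' : ∀ a ∈ e ⁻¹' pairStab S T x₀ xQ, ∀ b ∈ e ⁻¹' pairStab S T x₀ xQ,
          a + b ∈ e ⁻¹' pairStab S T x₀ xQ := by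
        intro a ha b hb
        simp only [Set.mem_preimage, hM'L] at ha hb ⊢
        exact Lset_add hS hrad hres he (relOf_mem hS x₀ xQ) a b ha hb
      refine ⟨mkSub hp (e ⁻¹' pairStab S T x₀ xQ) h0' hadd', ?_, ?_⟩
      · have hc : Nat.card (mkSub hp (e ⁻¹' pairStab S T x₀ xQ) h0' hadd')
            = Nat.card (e ⁻¹' pairStab S T x₀ xQ) := rfl
        rw [hc, ← card_M_eq_card_pre he hM'T]
        exact hcardM'
      · rw [mkSub_coe, M_image he hM'T]
        exact hline
    set LP := {ℓ | ℓ ∈ linesOf S T ∧ coset T x₀ ∈ ℓ} with hLP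
    let F : ↥LP → AddSubgroup (ZMod p × ZMod p) := fun ℓ => (hmain ℓ.1 ℓ.2).choose
    have hF1 : ∀ ℓ : ↥LP, Nat.card (F ℓ) = p := fun ℓ => (hmain ℓ.1 ℓ.2).choose_spec.1
    have hF2 : ∀ ℓ : ↥LP, (ℓ : Set (Set X)) = lineOf S T x₀ (e '' ((F ℓ) : Set (ZMod p × ZMod p))) :=
      fun ℓ => (hmain ℓ.1 ℓ.2).choose_spec.2
    have hFinj : ∀ ℓ₁ ℓ₂ : ↥LP, F ℓ₁ = F ℓ₂ → ℓ₁ = ℓ₂ := by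
      intro ℓ₁ ℓ₂ h
      apply Subtype.ext
      rw [hF2 ℓ₁, hF2 ℓ₂, h]
    classical
    let ψ : ↥LP → Option (ZMod p) := fun ℓ =>
      if h : ∃ m, ((1 : ZMod p), m) ∈ F ℓ then some h.choose else none
    have hψinj : Function.Injective ψ := by
      intro ℓ₁ ℓ₂ h
      by_cases h₁ : ∃ m, ((1 : ZMod p), m) ∈ F ℓ₁ <;>
        by_cases h₂ : ∃ m, ((1 : ZMod p), m) ∈ F ℓ₂
      · simp only [ψ, dif_pos h₁, dif_pos h₂, Option.some.injEq] at h
        apply hFinj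
        refine sub_eq_of_card_p_of_mem hp (hF1 ℓ₁) (hF1 ℓ₂)
          (v := ((1 : ZMod p), h₁.choose)) ?_ h₁.choose_spec ?_
        · intro h0
          have : (1 : ZMod p) = 0 := congrArg Prod.fst h0
          exact one_ne_zero this
        · rw [h]; exact h₂.choose_spec
      · simp only [ψ, dif_pos h₁, dif_neg h₂] at h
        exact (Option.some_ne_none _ h).elim
      · simp only [ψ, dif_neg h₁, dif_pos h₂] at h
        exact (Option.some_ne_none _ h.symm).elim
      · apply hFinj
        rw [vert_eq_of_no_one hp (hF1 ℓ₁) h₁, vert_eq_of_no_one hp (hF1 ℓ₂) h₂]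
    calc Nat.card ↥LP ≤ Nat.card (Option (ZMod p)) :=
          Nat.card_le_card_of_injective ψ hψinj
      _ = p + 1 := by rw [Nat.card_eq_fintype_card, Fintype.card_option, ZMod.card]
end

section
/- Let (X,S) be an association scheme whose thin residue T = O^θ(S) is the elementary abelian group C_p × C_p (p prime) and such that S//T is cyclic of prime order q. Then the following are equivalent: (i) (X,S) is commutative (the adjacency algebra ℂS is commutative); (ii) for each nonprincipal irreducible character φ of T, the support of the induced module ℂe_φ ⊗_{ℂT} ℂS is {1_X^T}; (iii) |TsT| = 1 for every s ∈ S \ T. -/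
open scoped Classical

/-- The adjacency matrix `σ_s`. -/
noncomputable def adjMat {X : Type*} [Fintype X] (s : Set (X × X)) : Matrix X X ℂ :=
  fun x y => if (x, y) ∈ s then 1 else 0

/-- The central primitive idempotent `e_φ` of `ℂT ≅ ℂ[C_p × C_p]` corresponding to the
irreducible character `φ`, transported by the isomorphism `e`. -/
noncomputable def eIdem {X : Type*} [Fintype X] (p : ℕ) [NeZero p]
    (φ : AddChar (ZMod p × ZMod p) ℂ) (e : ZMod p × ZMod p → Set (X × X)) : Matrix X X ℂ :=
  ((p : ℂ) ^ 2)⁻¹ • ∑ a : ZMod p × ZMod p, φ (-a) • adjMat (e a)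

/-!
As `T` is strongly normal, `TsT` consists of the relations contained in
`s ○ ⋃₀ T = ⋃₀ T ○ s`, and these relations, composed as relations, form the group `S//T` of
order `q`. Through `e`, `C_p × C_p` acts on `S` by `s ↦ e a ○ s`; write `L(s)` for the stabiliser.
Each of the three conditions says that `L(s)` is everything for `s ∉ T`:
* `TsT = {s}` iff `⋃₀ T ○ s = s`, i.e. `L(s) = ⊤`;
* at a pair of `s`, the entry of `e_φ σ_s` is `p⁻² ∑_{a ∈ L(s)} φ(-a)`, which vanishes for every
  `φ ≠ 1` iff `L(s) = ⊤`;
* if `ℂS` is commutative, `T` is central, so `L` is subadditive along complex products and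
  constant on the classes `s^T`. Since `S//T` is generated by any `s₀^T ≠ 1`, every `L(u)` lies in
  `L(s₀)`; then `e '' L(s₀)` is a strongly normal closed subset, so it contains the thin residue
  `T`, and `L(s₀) = ⊤`;
* conversely, if every `s ∉ T` is a union of `T`-classes, then `σ_u σ_v = p² σ_{u ○ v}` for
  `u, v ∉ T`, and `u ○ v = v ○ u` because `S//T` has prime order.
-/

open SetRel

lemma card_paths_ne_zero_iff {X : Type*} [Finite X] {s t : Set (X × X)} {x y : X} :
    Nat.card {z | (x, z) ∈ s ∧ (z, y) ∈ t} ≠ 0 ↔ (x, y) ∈ s ○ t := by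
  rw [Nat.card_ne_zero]
  exact ⟨fun ⟨⟨⟨z, hz⟩⟩, _⟩ => ⟨z, hz⟩, fun ⟨z, hz⟩ => ⟨⟨⟨z, hz⟩⟩, Set.toFinite _⟩⟩

lemma exists_addChar_ne_one_of_ne_top {G : Type*} [AddCommGroup G] [Finite G]
    {L : AddSubgroup G} (hL : L ≠ ⊤) : ∃ φ : AddChar G ℂ, φ ≠ 1 ∧ ∀ a ∈ L, φ a = 1 := by
  obtain ⟨a, ha⟩ : ∃ a, a ∉ L := by
    by_contra! h
    exact hL ((AddSubgroup.eq_top_iff' L).2 h)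
  obtain ⟨ψ, hψ⟩ := AddChar.exists_apply_ne_zero.2
    (show (QuotientAddGroup.mk a : G ⧸ L) ≠ 0 by rwa [Ne, QuotientAddGroup.eq_zero_iff])
  refine ⟨ψ.compAddMonoidHom (QuotientAddGroup.mk' L), fun h => hψ ?_, fun b hb => ?_⟩
  · simpa using DFunLike.congr_fun h a
  · simp [(QuotientAddGroup.eq_zero_iff b).2 hb]

namespace IsScheme

variable {X : Type*} {S : Set (Set (X × X))} {s t u : Set (X × X)} {x y : X}

section
variable (hS : IsScheme S)
include hS

lemma diagRel_mem : diagRel X ∈ S := hS.2.2.1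

lemma conv_mem (hs : s ∈ S) : conv s ∈ S := hS.2.2.2.1 s hs

noncomputable def relOf (x y : X) : Set (X × X) := (hS.1 x y).exists.choose

lemma relOf_mem : hS.relOf x y ∈ S := (hS.1 x y).exists.choose_spec.1

lemma mem_relOf : (x, y) ∈ hS.relOf x y := (hS.1 x y).exists.choose_spec.2

lemma eq_of_mem_of_mem (hs : s ∈ S) (hu : u ∈ S) (h₁ : (x, y) ∈ s) (h₂ : (x, y) ∈ u) :
    s = u :=
  (hS.1 x y).unique ⟨hs, h₁⟩ ⟨hu, h₂⟩

lemma eq_of_subset (hu : u ∈ S) (hs : s ∈ S) (h : u ⊆ s) : u = s := by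
  obtain ⟨⟨x, y⟩, hxy⟩ := hS.2.1 u hu
  exact hS.eq_of_mem_of_mem hu hs hxy (h hxy)

lemma mem_of_subset_sUnion {W : Set (Set (X × X))} (hu : u ∈ S) (hW : W ⊆ S)
    (h : u ⊆ ⋃₀ W) : u ∈ W := by
  obtain ⟨⟨x, y⟩, hxy⟩ := hS.2.1 u hu
  obtain ⟨w, hw, hxyw⟩ := h hxy
  rwa [hS.eq_of_mem_of_mem hu (hW hw) hxy hxyw]

lemma inum_eq (hs : s ∈ S) (ht : t ∈ S) (hu : u ∈ S) (h : (x, y) ∈ u) :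
    inum s t u = Nat.card {z | (x, z) ∈ s ∧ (z, y) ∈ t} := by
  have : {n | ∃ p ∈ u, n = Nat.card {z : X | (p.1, z) ∈ s ∧ (z, p.2) ∈ t}} =
      {Nat.card {z | (x, z) ∈ s ∧ (z, y) ∈ t}} := by
    ext n
    refine ⟨?_, fun hn => ⟨(x, y), h, hn⟩⟩
    rintro ⟨q, hq, rfl⟩
    exact hS.2.2.2.2 s hs t ht u hu q hq (x, y) h
  rw [inum, this, csSup_singleton]

variable [Finite X]

/-- The number of `s`-`t` paths from `x` to `y` only depends on the relation containing
`(x, y)`. -/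
lemma subset_comp_of_mem (hs : s ∈ S) (ht : t ∈ S) (hu : u ∈ S) (hxy : (x, y) ∈ u)
    (h : (x, y) ∈ s ○ t) : u ⊆ s ○ t := by
  rintro ⟨a, b⟩ hab
  rw [← card_paths_ne_zero_iff] at h ⊢
  rwa [← hS.inum_eq hs ht hu hab, hS.inum_eq hs ht hu hxy]

lemma exists_mem_right (hs : s ∈ S) (x : X) : ∃ y, (x, y) ∈ s := by
  obtain ⟨⟨a, b⟩, hab⟩ := hS.2.1 s hs
  obtain ⟨y, hy, -⟩ := hS.subset_comp_of_mem hs (hS.conv_mem hs) hS.diagRel_mem rfl ⟨b, hab, hab⟩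
    (show (x, x) ∈ diagRel X from rfl)
  exact ⟨y, hy⟩

lemma exists_mem_left (hs : s ∈ S) (y : X) : ∃ x, (x, y) ∈ s :=
  hS.exists_mem_right (hS.conv_mem hs) y

lemma mem_cprod_iff {A B : Set (Set (X × X))} (hA : A ⊆ S) (hB : B ⊆ S) :
    u ∈ cprod S A B ↔ u ∈ S ∧ u ⊆ ⋃₀ A ○ ⋃₀ B := by
  constructor
  · rintro ⟨hu, a, ha, b, hb, hne⟩
    obtain ⟨⟨x, y⟩, hxy⟩ := hS.2.1 u hu
    rw [hS.inum_eq (hA ha) (hB hb) hu hxy, card_paths_ne_zero_iff] at hne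
    refine ⟨hu, (hS.subset_comp_of_mem (hA ha) (hB hb) hu hxy hne).trans ?_⟩
    exact comp_subset_comp (Set.subset_sUnion_of_mem ha) (Set.subset_sUnion_of_mem hb)
  · rintro ⟨hu, hsub⟩
    obtain ⟨⟨x, y⟩, hxy⟩ := hS.2.1 u hu
    obtain ⟨z, ⟨a, ha, hxz⟩, ⟨b, hb, hzy⟩⟩ := hsub hxy
    refine ⟨hu, a, ha, b, hb, ?_⟩
    rw [hS.inum_eq (hA ha) (hB hb) hu hxy, card_paths_ne_zero_iff]
    exact ⟨z, hxz, hzy⟩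

lemma mem_cprod_singleton_iff (hs : s ∈ S) (ht : t ∈ S) :
    u ∈ cprod S {s} {t} ↔ u ∈ S ∧ u ⊆ s ○ t := by
  simpa using hS.mem_cprod_iff (Set.singleton_subset_iff.2 hs) (Set.singleton_subset_iff.2 ht)

lemma relOf_mem_cprod {A B : Set (Set (X × X))} (hA : A ⊆ S) (hB : B ⊆ S)
    (hs : s ∈ A) (ht : t ∈ B) (h : (x, y) ∈ s ○ t) : hS.relOf x y ∈ cprod S A B := by
  refine (hS.mem_cprod_iff hA hB).2 ⟨hS.relOf_mem, ?_⟩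
  refine (hS.subset_comp_of_mem (hA hs) (hB ht) hS.relOf_mem hS.mem_relOf h).trans ?_
  exact comp_subset_comp (Set.subset_sUnion_of_mem hs) (Set.subset_sUnion_of_mem ht)

lemma sUnion_cprod {A B : Set (Set (X × X))} (hA : A ⊆ S) (hB : B ⊆ S) :
    ⋃₀ cprod S A B = ⋃₀ A ○ ⋃₀ B := by
  refine subset_antisymm (Set.sUnion_subset fun u hu => ((hS.mem_cprod_iff hA hB).1 hu).2) ?_
  rintro ⟨x, y⟩ ⟨z, ⟨a, ha, hxz⟩, ⟨b, hb, hzy⟩⟩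
  exact ⟨_, hS.relOf_mem_cprod hA hB ha hb ⟨z, hxz, hzy⟩, hS.mem_relOf⟩

lemma cprod_eq_setOf_subset_sUnion {A B : Set (Set (X × X))} (hA : A ⊆ S) (hB : B ⊆ S) :
    cprod S A B = {u ∈ S | u ⊆ ⋃₀ cprod S A B} := by
  ext u
  rw [hS.mem_cprod_iff hA hB, hS.sUnion_cprod hA hB]
  rfl

lemma cprod_nonempty (hs : s ∈ S) (ht : t ∈ S) : (cprod S {s} {t}).Nonempty := by
  obtain ⟨⟨x, z⟩, hxz⟩ := hS.2.1 s hs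
  obtain ⟨y, hzy⟩ := hS.exists_mem_right ht z
  exact ⟨_, hS.relOf_mem_cprod (Set.singleton_subset_iff.2 hs) (Set.singleton_subset_iff.2 ht)
    rfl rfl ⟨z, hxz, hzy⟩⟩

lemma subset_comp_conv_of_mem_cprod (hs : s ∈ S) (ht : t ∈ S) (hu : u ∈ cprod S {s} {t}) :
    s ⊆ u ○ conv t := by
  obtain ⟨huS, hsub⟩ := (hS.mem_cprod_singleton_iff hs ht).1 hu
  obtain ⟨⟨x, y⟩, hxy⟩ := hS.2.1 u huS
  obtain ⟨z, hxz, hzy⟩ := hsub hxy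
  exact hS.subset_comp_of_mem huS (hS.conv_mem ht) hs hxz ⟨y, hxy, hzy⟩

end

end IsScheme

lemma cprod_mono {X : Type*} {S A A' B B' : Set (Set (X × X))} (hA : A ⊆ A') (hB : B ⊆ B') :
    cprod S A B ⊆ cprod S A' B' := by
  rintro u ⟨hu, a, ha, b, hb, h⟩
  exact ⟨hu, a, hA ha, b, hB hb, h⟩

lemma isStronglyNormal_self {X : Type*} {S : Set (Set (X × X))} (hS : S.Nonempty) :
    IsStronglyNormal S S :=
  ⟨⟨hS, subset_rfl, fun _ hu => hu.1⟩, fun _ _ _ hu => hu.1⟩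

lemma isStronglyNormal_thinResidue {X : Type*} {S : Set (Set (X × X))} (hS : S.Nonempty)
    (hne : (thinResidue S).Nonempty) : IsStronglyNormal S (thinResidue S) := by
  have hsub : ∀ V, IsStronglyNormal S V → thinResidue S ⊆ V := fun V hV =>
    Set.sInter_subset_of_mem hV
  refine ⟨⟨hne, hsub S (isStronglyNormal_self hS), fun u hu => ?_⟩, fun s hs u hu => ?_⟩
  · exact Set.mem_sInter.2 fun V hV => hV.1.2.2 (cprod_mono (hsub V hV) (hsub V hV) hu)
  · exact Set.mem_sInter.2 fun V hV =>
      hV.2 s hs (cprod_mono (cprod_mono subset_rfl (hsub V hV)) subset_rfl hu)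

namespace AssocScheme

variable {X : Type*} {S T : Set (Set (X × X))} {p q : ℕ}
  {e : ZMod p × ZMod p → Set (X × X)} {s s' t u v : Set (X × X)} {x y : X}

lemma conv_comp (A B : Set (X × X)) : conv (A ○ B) = conv B ○ conv A := inv_comp A B

lemma e_mem (hT : IsStronglyNormal S T) (he : IsoElemAb S T p e) (a : ZMod p × ZMod p) :
    e a ∈ S :=
  hT.1.2.1 (he.1 a)

lemma isClosedSub_image (hT : IsStronglyNormal S T) (he : IsoElemAb S T p e)
    (M : AddSubgroup (ZMod p × ZMod p)) : IsClosedSub S (e '' M) := by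
  refine ⟨⟨e 0, 0, M.zero_mem, rfl⟩, fun _ ⟨a, _, ha⟩ => ha ▸ e_mem hT he a, ?_⟩
  rintro u ⟨hu, _, ⟨a, ha, rfl⟩, _, ⟨b, hb, rfl⟩, hne⟩
  have h : u ∈ cprod S {e a} {e b} := ⟨hu, e a, rfl, e b, rfl, hne⟩
  rw [he.2.2.2.2] at h
  exact ⟨a + b, M.add_mem ha hb, h.symm⟩

lemma mem_sUnion_iff (he : IsoElemAb S T p e) : (x, y) ∈ ⋃₀ T ↔ ∃ a, (x, y) ∈ e a := by
  constructor
  · rintro ⟨t, ht, hxy⟩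
    obtain ⟨a, rfl⟩ := he.2.2.1 t ht
    exact ⟨a, hxy⟩
  · rintro ⟨a, hxy⟩
    exact ⟨e a, he.1 a, hxy⟩

lemma mem_sUnion_self (he : IsoElemAb S T p e) : (x, x) ∈ ⋃₀ T :=
  (mem_sUnion_iff he).2 ⟨0, by rw [he.2.2.2.1]; rfl⟩

lemma e_zero_comp (he : IsoElemAb S T p e) (s : Set (X × X)) : e 0 ○ s = s := by
  rw [he.2.2.2.1]
  exact id_comp s

def quotRel (T : Set (Set (X × X))) (s : Set (X × X)) : Set (X × X) := s ○ ⋃₀ T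

lemma subset_quotRel (he : IsoElemAb S T p e) : s ⊆ quotRel T s := fun ⟨_, y⟩ h =>
  ⟨y, h, mem_sUnion_self he⟩

lemma mem_of_quotRel_eq_sUnion (hS : IsScheme S) (hT : IsStronglyNormal S T)
    (he : IsoElemAb S T p e) (hs : s ∈ S) (h : quotRel T s = ⋃₀ T) : s ∈ T :=
  hS.mem_of_subset_sUnion hs hT.1.2.1 (h ▸ subset_quotRel he)

lemma sUnion_comp_subset [Finite X] (hS : IsScheme S) (hT : IsStronglyNormal S T) (hs : s ∈ S) :
    ⋃₀ T ○ s ⊆ s ○ ⋃₀ T := by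
  rintro ⟨x, y⟩ ⟨z, ⟨t, ht, hxz⟩, hzy⟩
  obtain ⟨w, hxw⟩ := hS.exists_mem_right hs x
  have h₁ : hS.relOf w z ∈ cprod S {conv s} T :=
    hS.relOf_mem_cprod (Set.singleton_subset_iff.2 (hS.conv_mem hs)) hT.1.2.1 rfl ht
      ⟨x, hxw, hxz⟩
  have h₂ : hS.relOf w y ∈ cprod S (cprod S {conv s} T) {s} :=
    hS.relOf_mem_cprod (fun _ h => h.1) (Set.singleton_subset_iff.2 hs) h₁ rfl
      ⟨z, hS.mem_relOf, hzy⟩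
  exact ⟨w, hxw, _, hT.2 s hs h₂, hS.mem_relOf⟩

section thin
variable [Finite X] (hS : IsScheme S) (hT : IsStronglyNormal S T) (he : IsoElemAb S T p e)
include hS hT he

lemma e_comp_e (a b : ZMod p × ZMod p) : e a ○ e b = e (a + b) := by
  have h := hS.sUnion_cprod (Set.singleton_subset_iff.2 (e_mem hT he a))
    (Set.singleton_subset_iff.2 (e_mem hT he b))
  rwa [he.2.2.2.2, Set.sUnion_singleton, Set.sUnion_singleton, Set.sUnion_singleton, eq_comm] at h

lemma e_neg_comp_e_comp (a : ZMod p × ZMod p) (s : Set (X × X)) : e (-a) ○ (e a ○ s) = s := by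
  rw [← comp_assoc, e_comp_e hS hT he, neg_add_cancel, e_zero_comp he]

lemma comp_e_comp_e_neg (a : ZMod p × ZMod p) (s : Set (X × X)) : s ○ e a ○ e (-a) = s := by
  rw [comp_assoc, e_comp_e hS hT he, add_neg_cancel, he.2.2.2.1]
  exact comp_id s

lemma conv_e (a : ZMod p × ZMod p) : conv (e a) = e (-a) := by
  obtain ⟨⟨x, y⟩, hxy⟩ := hS.2.1 _ (e_mem hT he a)
  obtain ⟨z, hyz⟩ := hS.exists_mem_right (e_mem hT he (-a)) y
  have hxz : (x, z) ∈ e a ○ e (-a) := ⟨y, hxy, hyz⟩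
  rw [e_comp_e hS hT he, add_neg_cancel, he.2.2.2.1] at hxz
  cases hxz
  exact hS.eq_of_mem_of_mem (hS.conv_mem (e_mem hT he a)) (e_mem hT he (-a)) hxy hyz

lemma e_right_unique {a : ZMod p × ZMod p} {y' : X} (h : (x, y) ∈ e a) (h' : (x, y') ∈ e a) :
    y = y' := by
  have : (y, y') ∈ conv (e a) ○ e a := ⟨x, h, h'⟩
  rwa [conv_e hS hT he, e_comp_e hS hT he, neg_add_cancel, he.2.2.2.1] at this

lemma e_left_unique {a : ZMod p × ZMod p} {x' : X} (h : (x, y) ∈ e a) (h' : (x', y) ∈ e a) :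
    x = x' := by
  rw [← neg_neg a, ← conv_e hS hT he] at h h'
  exact e_right_unique hS hT he h h'

lemma e_comp_mem (a : ZMod p × ZMod p) (hs : s ∈ S) : e a ○ s ∈ S := by
  obtain ⟨⟨z, y⟩, hzy⟩ := hS.2.1 s hs
  obtain ⟨x, hxz⟩ := hS.exists_mem_left (e_mem hT he a) z
  have hu : hS.relOf x y ⊆ e a ○ s :=
    hS.subset_comp_of_mem (e_mem hT he a) hs hS.relOf_mem hS.mem_relOf ⟨z, hxz, hzy⟩
  have hs' : s ⊆ e (-a) ○ hS.relOf x y := by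
    refine hS.subset_comp_of_mem (e_mem hT he (-a)) hS.relOf_mem hs hzy ⟨x, ?_, hS.mem_relOf⟩
    rw [← conv_e hS hT he]
    exact hxz
  have : e a ○ s ⊆ hS.relOf x y := by
    refine (comp_subset_comp_right hs').trans ?_
    rw [← comp_assoc, e_comp_e hS hT he, add_neg_cancel, e_zero_comp he]
  rw [subset_antisymm this hu]
  exact hS.relOf_mem

lemma comp_e_mem (a : ZMod p × ZMod p) (hs : s ∈ S) : s ○ e a ∈ S := by
  have h := hS.conv_mem (e_comp_mem hS hT he (-a) (hS.conv_mem hs))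
  rwa [conv_comp, ← conv_e hS hT he] at h

lemma e_comp_eq_of_sUnion_comp_eq (hs : s ∈ S) (h : ⋃₀ T ○ s = s) (a : ZMod p × ZMod p) :
    e a ○ s = s := by
  refine hS.eq_of_subset (e_comp_mem hS hT he a hs) hs ?_
  calc e a ○ s ⊆ ⋃₀ T ○ s := comp_subset_comp_left (Set.subset_sUnion_of_mem (he.1 a))
    _ = s := h

lemma comp_e_eq_of_comp_sUnion_eq (hs : s ∈ S) (h : s ○ ⋃₀ T = s) (a : ZMod p × ZMod p) :
    s ○ e a = s := by
  refine hS.eq_of_subset (comp_e_mem hS hT he a hs) hs ?_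
  calc s ○ e a ⊆ s ○ ⋃₀ T := comp_subset_comp_right (Set.subset_sUnion_of_mem (he.1 a))
    _ = s := h

lemma sUnion_comp_sUnion : ⋃₀ T ○ ⋃₀ T = ⋃₀ T := by
  ext ⟨x, y⟩
  constructor
  · rintro ⟨z, hxz, hzy⟩
    obtain ⟨a, ha⟩ := (mem_sUnion_iff he).1 hxz
    obtain ⟨b, hb⟩ := (mem_sUnion_iff he).1 hzy
    rw [mem_sUnion_iff he]
    exact ⟨a + b, by rw [← e_comp_e hS hT he]; exact ⟨z, ha, hb⟩⟩
  · intro h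
    exact ⟨x, mem_sUnion_self he, h⟩

lemma mem_sUnion_symm (h : (x, y) ∈ ⋃₀ T) : (y, x) ∈ ⋃₀ T := by
  obtain ⟨a, ha⟩ := (mem_sUnion_iff he).1 h
  refine (mem_sUnion_iff he).2 ⟨-a, ?_⟩
  rw [← conv_e hS hT he]
  exact ha

lemma conv_sUnion : conv (⋃₀ T) = ⋃₀ T := by
  ext ⟨x, y⟩
  exact ⟨mem_sUnion_symm hS hT he, mem_sUnion_symm hS hT he⟩

lemma conv_comp_subset_sUnion (hs : s ∈ S) : conv s ○ s ⊆ ⋃₀ T := by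
  rintro ⟨x, y⟩ ⟨z, hxz, hzy⟩
  have h₁ : hS.relOf x z ∈ cprod S {conv s} T :=
    hS.relOf_mem_cprod (Set.singleton_subset_iff.2 (hS.conv_mem hs)) hT.1.2.1 rfl (he.1 0)
      ⟨z, hxz, by rw [he.2.2.2.1]; rfl⟩
  have h₂ : hS.relOf x y ∈ cprod S (cprod S {conv s} T) {s} :=
    hS.relOf_mem_cprod (fun _ h => h.1) (Set.singleton_subset_iff.2 hs) h₁ rfl
      ⟨z, hS.mem_relOf, hzy⟩
  exact ⟨_, hT.2 s hs h₂, hS.mem_relOf⟩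

lemma sUnion_comp_eq (hs : s ∈ S) : ⋃₀ T ○ s = s ○ ⋃₀ T := by
  refine subset_antisymm (sUnion_comp_subset hS hT hs) ?_
  rintro ⟨x, y⟩ ⟨z, hxz, hzy⟩
  obtain ⟨w, hyw, hwx⟩ :=
    sUnion_comp_subset hS hT (hS.conv_mem hs) (prodMk_mem_comp (mem_sUnion_symm hS hT he hzy) hxz)
  exact ⟨w, mem_sUnion_symm hS hT he hwx, hyw⟩

lemma quotRel_comp_sUnion : quotRel T s ○ ⋃₀ T = quotRel T s := by
  rw [quotRel, comp_assoc, sUnion_comp_sUnion hS hT he]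

lemma sUnion_comp_quotRel (hs : s ∈ S) : ⋃₀ T ○ quotRel T s = quotRel T s := by
  rw [quotRel, ← comp_assoc, sUnion_comp_eq hS hT he hs, comp_assoc, sUnion_comp_sUnion hS hT he]

lemma quotRel_comp_quotRel (hs : s ∈ S) (hs' : s' ∈ S) (hu : u ∈ cprod S {s} {s'}) :
    quotRel T s ○ quotRel T s' = quotRel T u := by
  obtain ⟨huS, hus⟩ := (hS.mem_cprod_singleton_iff hs hs').1 hu
  have hss' : s ○ s' ⊆ quotRel T u := by
    refine (comp_subset_comp_left (hS.subset_comp_conv_of_mem_cprod hs hs' hu)).trans ?_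
    rw [comp_assoc]
    exact comp_subset_comp_right (conv_comp_subset_sUnion hS hT he hs')
  calc quotRel T s ○ quotRel T s' = s ○ (⋃₀ T ○ s' ○ ⋃₀ T) := by simp only [quotRel, comp_assoc]
    _ = (s ○ s') ○ ⋃₀ T := by
      rw [sUnion_comp_eq hS hT he hs', comp_assoc, sUnion_comp_sUnion hS hT he, comp_assoc]
    _ = quotRel T u := ?_
  refine subset_antisymm ?_ (comp_subset_comp_left hus)
  rw [← quotRel_comp_sUnion hS hT he (s := u)]
  exact comp_subset_comp_left hss'

lemma quotRel_of_mem (ht : t ∈ T) : quotRel T t = ⋃₀ T := by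
  obtain ⟨a, rfl⟩ := he.2.2.1 t ht
  refine subset_antisymm ?_ fun ⟨x, y⟩ hxy => ?_
  · rw [← sUnion_comp_sUnion hS hT he]
    exact comp_subset_comp_left (Set.subset_sUnion_of_mem (he.1 a))
  · obtain ⟨b, hb⟩ := (mem_sUnion_iff he).1 hxy
    rw [← add_neg_cancel_left a b, ← e_comp_e hS hT he] at hb
    obtain ⟨z, hxz, hzy⟩ := hb
    exact ⟨z, hxz, (mem_sUnion_iff he).2 ⟨_, hzy⟩⟩

lemma conv_quotRel (hs : s ∈ S) : conv (quotRel T s) = quotRel T (conv s) := by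
  rw [quotRel, conv_comp, conv_sUnion hS hT he, sUnion_comp_eq hS hT he (hS.conv_mem hs)]
  rfl

lemma sUnion_doubleCoset (hs : s ∈ S) : ⋃₀ cprod S (cprod S T {s}) T = quotRel T s := by
  rw [hS.sUnion_cprod (fun _ h => h.1) hT.1.2.1,
    hS.sUnion_cprod hT.1.2.1 (Set.singleton_subset_iff.2 hs), Set.sUnion_singleton,
    sUnion_comp_eq hS hT he hs, comp_assoc, sUnion_comp_sUnion hS hT he]
  rfl

lemma doubleCoset_eq_singleton_iff (hs : s ∈ S) :
    cprod S (cprod S T {s}) T = {s} ↔ quotRel T s = s := by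
  refine ⟨fun h => by rw [← sUnion_doubleCoset hS hT he hs, h, Set.sUnion_singleton], fun h => ?_⟩
  rw [hS.cprod_eq_setOf_subset_sUnion (fun _ h => h.1) hT.1.2.1, sUnion_doubleCoset hS hT he hs, h]
  ext u
  constructor
  · exact fun hu => hS.eq_of_subset hu.1 hs hu.2
  · rintro rfl
    exact ⟨hs, subset_rfl⟩

end thin

/-- `S//T`, with `s^T` encoded by the relation `quotRel T s = s ○ ⋃₀ T`, the union of `TsT`. -/
def QuotRels (S T : Set (Set (X × X))) : Type _ := {R : Set (X × X) // ∃ s ∈ S, R = quotRel T s}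

def QuotRels.mk (hs : s ∈ S) : QuotRels S T := ⟨quotRel T s, s, hs, rfl⟩

section group
variable [Finite X] (hS : IsScheme S) (hT : IsStronglyNormal S T) (he : IsoElemAb S T p e)
include hS hT he

noncomputable abbrev quotGroup : Group (QuotRels S T) :=
  letI : Mul (QuotRels S T) := ⟨fun A B => ⟨A.1 ○ B.1, by
    obtain ⟨s, hs, hA⟩ := A.2
    obtain ⟨s', hs', hB⟩ := B.2
    obtain ⟨u, hu⟩ := hS.cprod_nonempty hs hs'
    exact ⟨u, hu.1, by rw [hA, hB, quotRel_comp_quotRel hS hT he hs hs' hu]⟩⟩⟩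
  letI : One (QuotRels S T) := ⟨⟨⋃₀ T, e 0, e_mem hT he 0, (quotRel_of_mem hS hT he (he.1 0)).symm⟩⟩
  letI : Inv (QuotRels S T) := ⟨fun A => ⟨conv A.1, by
    obtain ⟨s, hs, hA⟩ := A.2
    exact ⟨conv s, hS.conv_mem hs, by rw [hA, conv_quotRel hS hT he hs]⟩⟩⟩
  Group.ofLeftAxioms (fun _ _ _ => Subtype.ext (comp_assoc _ _ _))
    (fun A => Subtype.ext (by
      obtain ⟨s, hs, hA⟩ := A.2
      change ⋃₀ T ○ A.1 = A.1
      rw [hA, sUnion_comp_quotRel hS hT he hs]))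
    (fun A => Subtype.ext (by
      obtain ⟨s, hs, hA⟩ := A.2
      obtain ⟨u, hu⟩ := hS.cprod_nonempty (hS.conv_mem hs) hs
      have huT : u ∈ T := hS.mem_of_subset_sUnion hu.1 hT.1.2.1
        ((((hS.mem_cprod_singleton_iff (hS.conv_mem hs) hs).1 hu).2).trans
          (conv_comp_subset_sUnion hS hT he hs))
      change conv A.1 ○ A.1 = ⋃₀ T
      rw [hA, conv_quotRel hS hT he hs,
        quotRel_comp_quotRel hS hT he (hS.conv_mem hs) hs hu, quotRel_of_mem hS hT he huT]))

lemma card_quotRels :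
    Nat.card (QuotRels S T) = Nat.card {C | ∃ s ∈ S, C = cprod S (cprod S T {s}) T} := by
  symm
  refine Nat.card_eq_of_bijective (fun C => ⟨⋃₀ C.1, ?_⟩) ⟨fun C D h => ?_, fun R => ?_⟩
  · obtain ⟨s, hs, hC⟩ := C.2
    exact ⟨s, hs, by rw [hC, sUnion_doubleCoset hS hT he hs]⟩
  · obtain ⟨s, hs, hC⟩ := C.2
    obtain ⟨s', hs', hD⟩ := D.2
    have hU : ⋃₀ C.1 = ⋃₀ D.1 := congrArg Subtype.val h
    apply Subtype.ext
    rw [hC, hD] at hU ⊢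
    rw [hS.cprod_eq_setOf_subset_sUnion (fun _ h => h.1) hT.1.2.1, hU,
      ← hS.cprod_eq_setOf_subset_sUnion (fun _ h => h.1) hT.1.2.1]
  · obtain ⟨s, hs, hR⟩ := R.2
    exact ⟨⟨_, s, hs, rfl⟩, Subtype.ext (hR ▸ sUnion_doubleCoset hS hT he hs)⟩

variable (hq : q.Prime)
  (hquot : Nat.card {C : Set (Set (X × X)) | ∃ s ∈ S, C = cprod S (cprod S T {s}) T} = q)
include hq hquot

lemma quotRel_comp_comm (hu : u ∈ S) (hv : v ∈ S) :
    quotRel T u ○ quotRel T v = quotRel T v ○ quotRel T u := by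
  let _ := quotGroup hS hT he
  have : Fact q.Prime := ⟨hq⟩
  have := isCyclic_of_prime_card ((card_quotRels hS hT he).trans hquot)
  let _ := IsCyclic.commGroup (α := QuotRels S T)
  exact congrArg Subtype.val (mul_comm (QuotRels.mk (T := T) hu) (QuotRels.mk hv))

/-- Induction along the powers of `s₀^T`, which generates the group `S//T` of prime order. -/
lemma induction_of_generator {s₀ : Set (X × X)} (hs₀ : s₀ ∈ S \ T) {P : Set (X × X) → Prop}
    (hT' : ∀ t ∈ T, P t) (hmul : ∀ u ∈ S, ∀ w ∈ cprod S {u} {s₀}, P u → P w)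
    (hquotRel : ∀ u ∈ S, ∀ v ∈ S, quotRel T u = quotRel T v → P u → P v) :
    ∀ u ∈ S, P u := by
  let _ := quotGroup hS hT he
  have : Fact q.Prime := ⟨hq⟩
  set c : QuotRels S T := QuotRels.mk hs₀.1
  have hpow : ∀ n : ℕ, ∀ u (hu : u ∈ S), QuotRels.mk hu = c ^ n → P u := by
    intro n
    induction n with
    | zero =>
      intro u hu h
      exact hT' u (mem_of_quotRel_eq_sUnion hS hT he hu (congrArg Subtype.val h))
    | succ n ih =>
      intro u hu h
      obtain ⟨v, hv, hcn⟩ := (c ^ n).2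
      obtain ⟨w, hw⟩ := hS.cprod_nonempty hv hs₀.1
      have hwu : quotRel T w = quotRel T u := by
        rw [← quotRel_comp_quotRel hS hT he hv hs₀.1 hw, ← hcn]
        exact (congrArg Subtype.val (h.trans (pow_succ c n))).symm
      exact hquotRel w hw.1 u hu hwu (hmul v hv w hw (ih v hv (Subtype.ext hcn.symm)))
  have hc : c ≠ 1 := fun h =>
    hs₀.2 (mem_of_quotRel_eq_sUnion hS hT he hs₀.1 (congrArg Subtype.val h))
  intro u hu
  obtain ⟨n, hn⟩ :=
    mem_powers_of_prime_card ((card_quotRels hS hT he).trans hquot) hc (g' := QuotRels.mk hu)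
  exact hpow n u hu hn.symm

end group

section stab
variable [Finite X] (hS : IsScheme S) (hT : IsStronglyNormal S T) (he : IsoElemAb S T p e)
include hS hT he

/-- The left stabiliser `lstab S T s` (the paper's `L(s)`), pulled back along `e`. -/
def leftStab (s : Set (X × X)) : AddSubgroup (ZMod p × ZMod p) where
  carrier := {a | e a ○ s = s}
  zero_mem' := e_zero_comp he s
  add_mem' {a b} ha hb := by
    change e (a + b) ○ s = s
    rw [← e_comp_e hS hT he, comp_assoc, show e b ○ s = s from hb, show e a ○ s = s from ha]
  neg_mem' {a} ha := by
    change e (-a) ○ s = s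
    conv_lhs => rw [← show e a ○ s = s from ha]
    exact e_neg_comp_e_comp hS hT he a s

lemma mem_leftStab {a : ZMod p × ZMod p} : a ∈ leftStab hS hT he s ↔ e a ○ s = s := Iff.rfl

lemma leftStab_eq_top_iff (hs : s ∈ S) : leftStab hS hT he s = ⊤ ↔ quotRel T s = s := by
  rw [AddSubgroup.eq_top_iff', quotRel, ← sUnion_comp_eq hS hT he hs]
  refine ⟨fun h => subset_antisymm ?_ fun ⟨x, y⟩ hxy => ⟨x, mem_sUnion_self he, hxy⟩, fun h a => ?_⟩
  · rintro ⟨x, y⟩ ⟨z, hxz, hzy⟩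
    obtain ⟨a, ha⟩ := (mem_sUnion_iff he).1 hxz
    rw [← h a]
    exact ⟨z, ha, hzy⟩
  · exact e_comp_eq_of_sUnion_comp_eq hS hT he hs h a

lemma sub_mem_leftStab {a b : ZMod p × ZMod p} (h : e a ○ s = e b ○ s) :
    a - b ∈ leftStab hS hT he s := by
  change e (a - b) ○ s = s
  rw [sub_eq_neg_add, ← e_comp_e hS hT he, comp_assoc, h, e_neg_comp_e_comp hS hT he]

lemma leftStab_comp_e (b : ZMod p × ZMod p) :
    leftStab hS hT he (s ○ e b) = leftStab hS hT he s := by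
  ext a
  simp only [mem_leftStab, ← comp_assoc]
  refine ⟨fun h => ?_, fun h => by rw [h]⟩
  rw [← comp_e_comp_e_neg hS hT he b (e a ○ s), h, comp_e_comp_e_neg hS hT he]

lemma leftStab_eq_of_quotRel_eq (hu : u ∈ S) (hv : v ∈ S) (h : quotRel T u = quotRel T v) :
    leftStab hS hT he u = leftStab hS hT he v := by
  obtain ⟨⟨x, y⟩, hxy⟩ := hS.2.1 v hv
  obtain ⟨z, hxz, hzy⟩ : (x, y) ∈ quotRel T u := by
    rw [h]
    exact subset_quotRel he hxy
  obtain ⟨b, hb⟩ := (mem_sUnion_iff he).1 hzy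
  rw [hS.eq_of_mem_of_mem hv (comp_e_mem hS hT he b hu) hxy ⟨z, hxz, hb⟩, leftStab_comp_e]

lemma leftStab_eq_bot (ht : t ∈ T) : leftStab hS hT he t = ⊥ := by
  obtain ⟨b, rfl⟩ := he.2.2.1 t ht
  refine (AddSubgroup.eq_bot_iff_forall _).2 fun a ha => ?_
  have h : e (a + b) = e b := (e_comp_e hS hT he a b).symm.trans ha
  simpa using he.2.1 h

section central
variable (hcen : ∀ a, ∀ s ∈ S, e a ○ s = s ○ e a)
include hcen

lemma leftStab_le_sup (hs : s ∈ S) (hs' : s' ∈ S) (hu : u ∈ cprod S {s} {s'}) :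
    leftStab hS hT he u ≤ leftStab hS hT he s ⊔ leftStab hS hT he s' := by
  intro a ha
  obtain ⟨huS, hus⟩ := (hS.mem_cprod_singleton_iff hs hs').1 hu
  obtain ⟨⟨x, z⟩, hxz⟩ := hS.2.1 u huS
  obtain ⟨y, hxy, hyz⟩ := hus hxz
  obtain ⟨y', hxy', hy'z⟩ : (x, z) ∈ e a ○ s ○ s' := by
    rw [comp_assoc]
    exact comp_subset_comp_right hus (show (x, z) ∈ e a ○ u by rwa [(mem_leftStab hS hT he).1 ha])
  have hyy' : (y, y') ∈ ⋃₀ T := by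
    rw [hcen a s hs] at hxy'
    obtain ⟨m, hxm, hmy'⟩ := hxy'
    rw [← sUnion_comp_sUnion hS hT he]
    exact ⟨m, conv_comp_subset_sUnion hS hT he hs (show (y, m) ∈ conv s ○ s from ⟨x, hxy, hxm⟩),
      Set.subset_sUnion_of_mem (he.1 a) hmy'⟩
  obtain ⟨d, hd⟩ := (mem_sUnion_iff he).1 hyy'
  have hds' : d ∈ leftStab hS hT he s' :=
    hS.eq_of_mem_of_mem (e_comp_mem hS hT he d hs') hs' ⟨y', hd, hy'z⟩ hyz
  have hsd : e a ○ s = e d ○ s := by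
    rw [hcen d s hs]
    exact hS.eq_of_mem_of_mem (e_comp_mem hS hT he a hs) (comp_e_mem hS hT he d hs) hxy'
      ⟨y, hxy, hd⟩
  have := add_mem (AddSubgroup.mem_sup_left (sub_mem_leftStab hS hT he hsd))
    (AddSubgroup.mem_sup_right hds')
  rwa [sub_add_cancel] at this

lemma isStronglyNormal_image_of_forall_leftStab_le (M : AddSubgroup (ZMod p × ZMod p))
    (hM : ∀ u ∈ S, leftStab hS hT he u ≤ M) : IsStronglyNormal S (e '' M) := by
  refine ⟨isClosedSub_image hT he M, fun s hs v hv => ?_⟩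
  obtain ⟨hvS, hvsub⟩ := (hS.mem_cprod_iff (fun _ h => h.1) (Set.singleton_subset_iff.2 hs)).1 hv
  rw [hS.sUnion_cprod (Set.singleton_subset_iff.2 (hS.conv_mem hs)) (isClosedSub_image hT he M).2.1,
    Set.sUnion_singleton, Set.sUnion_singleton] at hvsub
  obtain ⟨⟨x, y⟩, hxy⟩ := hS.2.1 v hvS
  obtain ⟨w, ⟨z, hxz, _, ⟨a, ha, rfl⟩, hzw⟩, hwy⟩ := hvsub hxy
  obtain ⟨m, hzm, hmy⟩ : (z, y) ∈ s ○ e a := by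
    rw [← hcen a s hs]
    exact ⟨w, hzw, hwy⟩
  obtain ⟨b, hb⟩ := (mem_sUnion_iff he).1
    (conv_comp_subset_sUnion hS hT he hs (show (x, m) ∈ conv s ○ s from ⟨z, hxz, hzm⟩))
  have hbs : b ∈ leftStab hS hT he s := by
    change e b ○ s = s
    rw [hcen b s hs]
    exact hS.eq_of_mem_of_mem (comp_e_mem hS hT he b hs) hs ⟨x, hxz, hb⟩ hzm
  refine ⟨b + a, M.add_mem (hM s hs hbs) ha, ?_⟩
  refine hS.eq_of_mem_of_mem (e_mem hT he _) hvS ?_ hxy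
  rw [← e_comp_e hS hT he]
  exact ⟨m, hb, hmy⟩

lemma eq_top_of_forall_leftStab_le (hres : thinResidue S = T) (M : AddSubgroup (ZMod p × ZMod p))
    (hM : ∀ u ∈ S, leftStab hS hT he u ≤ M) : M = ⊤ := by
  have hTM : T ⊆ e '' M := hres ▸
    Set.sInter_subset_of_mem (isStronglyNormal_image_of_forall_leftStab_le hS hT he hcen M hM)
  refine (AddSubgroup.eq_top_iff' M).2 fun a => ?_
  obtain ⟨b, hb, hba⟩ := hTM (he.1 a)
  rwa [← he.2.1 hba]

lemma leftStab_eq_top_of_central (hq : q.Prime)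
    (hquot : Nat.card {C : Set (Set (X × X)) | ∃ s ∈ S, C = cprod S (cprod S T {s}) T} = q)
    (hres : thinResidue S = T) (hs : s ∈ S \ T) : leftStab hS hT he s = ⊤ :=
  eq_top_of_forall_leftStab_le hS hT he hcen hres _ <|
    induction_of_generator hS hT he hq hquot hs
      (fun t ht => by rw [leftStab_eq_bot hS hT he ht]; exact bot_le)
      (fun u hu w hw h => (leftStab_le_sup hS hT he hcen hu hs.1 hw).trans (sup_le h le_rfl))
      (fun u hu v hv h h' => leftStab_eq_of_quotRel_eq hS hT he hu hv h ▸ h')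

end central

end stab

section matrix
variable [Fintype X]

lemma adjMat_mul_apply (u v : Set (X × X)) (x y : X) :
    (adjMat u * adjMat v) x y = Nat.card {z | (x, z) ∈ u ∧ (z, y) ∈ v} := by
  rw [Matrix.mul_apply, Nat.card_eq_fintype_card, Fintype.card_subtype, ← Finset.sum_boole]
  refine Finset.sum_congr rfl fun z _ => ?_
  by_cases h₁ : (x, z) ∈ u <;> by_cases h₂ : (z, y) ∈ v <;> simp [adjMat, h₁, h₂]

lemma adjMat_injective : Function.Injective (adjMat : Set (X × X) → Matrix X X ℂ) := by
  intro u v h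
  ext ⟨x, y⟩
  have := congrFun (congrFun h x) y
  by_cases hu : (x, y) ∈ u <;> by_cases hv : (x, y) ∈ v <;> simp_all [adjMat]

lemma adjMat_mul_eq_of_subsingleton (h : ∀ x y, {z | (x, z) ∈ u ∧ (z, y) ∈ v}.Subsingleton) :
    adjMat u * adjMat v = adjMat (u ○ v) := by
  ext x y
  rw [adjMat_mul_apply]
  by_cases hxy : (x, y) ∈ u ○ v
  · obtain ⟨z, hz⟩ := hxy
    rw [(h x y).eq_singleton_of_mem hz]
    simp [adjMat, show (x, y) ∈ u ○ v from ⟨z, hz⟩]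
  · have : {z | (x, z) ∈ u ∧ (z, y) ∈ v} = ∅ :=
      Set.eq_empty_of_forall_notMem fun z hz => hxy ⟨z, hz⟩
    simp [adjMat, hxy, this]

variable (hS : IsScheme S) (hT : IsStronglyNormal S T) (he : IsoElemAb S T p e)
include hS hT he

lemma adjMat_e_mul (a : ZMod p × ZMod p) (s : Set (X × X)) :
    adjMat (e a) * adjMat s = adjMat (e a ○ s) :=
  adjMat_mul_eq_of_subsingleton fun _ _ _ hz _ hz' => e_right_unique hS hT he hz.1 hz'.1

lemma adjMat_mul_e (a : ZMod p × ZMod p) (s : Set (X × X)) :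
    adjMat s * adjMat (e a) = adjMat (s ○ e a) :=
  adjMat_mul_eq_of_subsingleton fun _ _ _ hz _ hz' => e_left_unique hS hT he hz.2 hz'.2

lemma e_comp_comm_of_adjMat_comm
    (hA : ∀ u ∈ S, ∀ v ∈ S, adjMat u * adjMat v = adjMat v * adjMat u)
    (a : ZMod p × ZMod p) (s : Set (X × X)) (hs : s ∈ S) : e a ○ s = s ○ e a :=
  adjMat_injective (by
    rw [← adjMat_e_mul hS hT he, ← adjMat_mul_e hS hT he]
    exact hA _ (e_mem hT he a) s hs)

lemma card_setOf_mem_sUnion (z : X) : Nat.card {w | (z, w) ∈ ⋃₀ T} = p ^ 2 := by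
  have hsucc : ∀ a, ∃ w, (z, w) ∈ e a := fun a => hS.exists_mem_right (e_mem hT he a) z
  rw [sq, ← Nat.card_zmod p, ← Nat.card_prod]
  refine (Nat.card_eq_of_bijective (fun a => ⟨(hsucc a).choose,
    (mem_sUnion_iff he).2 ⟨a, (hsucc a).choose_spec⟩⟩) ⟨fun a b hab => ?_, fun w => ?_⟩).symm
  · refine he.2.1 (hS.eq_of_mem_of_mem (e_mem hT he a) (e_mem hT he b) (hsucc a).choose_spec ?_)
    rw [show (hsucc a).choose = (hsucc b).choose from congrArg Subtype.val hab]
    exact (hsucc b).choose_spec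
  · obtain ⟨a, ha⟩ := (mem_sUnion_iff he).1 w.2
    exact ⟨a, Subtype.ext (e_right_unique hS hT he (hsucc a).choose_spec ha)⟩

/-- When `u` is `T`-invariant on the right and `v` on the left, the paths from `x` to `y`
through `u` and `v` fill a whole `T`-class. -/
lemma adjMat_mul_eq_of_comp_sUnion (hu : u ∈ S) (hu' : u ○ ⋃₀ T = u) (hv : ⋃₀ T ○ v = v) :
    adjMat u * adjMat v = ((p : ℂ) ^ 2) • adjMat (u ○ v) := by
  ext x y
  rw [adjMat_mul_apply, Matrix.smul_apply]
  by_cases hxy : (x, y) ∈ u ○ v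
  · obtain ⟨z₀, hxz₀, hz₀y⟩ := hxy
    have : {z | (x, z) ∈ u ∧ (z, y) ∈ v} = {w | (z₀, w) ∈ ⋃₀ T} := by
      ext z
      refine ⟨fun hz => conv_comp_subset_sUnion hS hT he hu
        (show (z₀, z) ∈ conv u ○ u from ⟨x, hxz₀, hz.1⟩), fun hz => ⟨?_, ?_⟩⟩
      · rw [← hu']
        exact ⟨z₀, hxz₀, hz⟩
      · rw [← hv]
        exact ⟨z₀, mem_sUnion_symm hS hT he hz, hz₀y⟩
    rw [this, card_setOf_mem_sUnion hS hT he]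
    simp [adjMat, show (x, y) ∈ u ○ v from ⟨z₀, hxz₀, hz₀y⟩]
  · have : {z | (x, z) ∈ u ∧ (z, y) ∈ v} = ∅ :=
      Set.eq_empty_of_forall_notMem fun z hz => hxy ⟨z, hz⟩
    simp [adjMat, hxy, this]

lemma adjMat_comm_of_forall_quotRel_eq (hq : q.Prime)
    (hquot : Nat.card {C : Set (Set (X × X)) | ∃ s ∈ S, C = cprod S (cprod S T {s}) T} = q)
    (hC : ∀ s ∈ S \ T, quotRel T s = s) :
    ∀ u ∈ S, ∀ v ∈ S, adjMat u * adjMat v = adjMat v * adjMat u := by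
  have hleft : ∀ s ∈ S \ T, ⋃₀ T ○ s = s := fun s hs =>
    (sUnion_comp_eq hS hT he hs.1).trans (hC s hs)
  have hcen : ∀ a, ∀ s ∈ S, e a ○ s = s ○ e a := by
    intro a s hs
    by_cases hsT : s ∈ T
    · obtain ⟨b, rfl⟩ := he.2.2.1 s hsT
      rw [e_comp_e hS hT he, e_comp_e hS hT he, add_comm]
    · rw [e_comp_eq_of_sUnion_comp_eq hS hT he hs (hleft s ⟨hs, hsT⟩),
        comp_e_eq_of_comp_sUnion_eq hS hT he hs (hC s ⟨hs, hsT⟩)]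
  intro u hu v hv
  by_cases huT : u ∈ T
  · obtain ⟨a, rfl⟩ := he.2.2.1 u huT
    rw [adjMat_e_mul hS hT he, adjMat_mul_e hS hT he, hcen a v hv]
  by_cases hvT : v ∈ T
  · obtain ⟨b, rfl⟩ := he.2.2.1 v hvT
    rw [adjMat_e_mul hS hT he, adjMat_mul_e hS hT he, hcen b u hu]
  have hcomm := quotRel_comp_comm hS hT he hq hquot hu hv
  rw [hC u ⟨hu, huT⟩, hC v ⟨hv, hvT⟩] at hcomm
  rw [adjMat_mul_eq_of_comp_sUnion hS hT he hu (hC u ⟨hu, huT⟩) (hleft v ⟨hv, hvT⟩),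
    adjMat_mul_eq_of_comp_sUnion hS hT he hv (hC v ⟨hv, hvT⟩) (hleft u ⟨hu, huT⟩), hcomm]

variable [NeZero p]

lemma eIdem_mul_adjMat (φ : AddChar (ZMod p × ZMod p) ℂ) (s : Set (X × X)) :
    eIdem p φ e * adjMat s = ((p : ℂ) ^ 2)⁻¹ • ∑ a, φ (-a) • adjMat (e a ○ s) := by
  simp only [eIdem, Matrix.smul_mul, Finset.sum_mul, adjMat_e_mul hS hT he]

/-- At a pair `(x, y) ∈ s`, the entry of `e_φ σ_s` is `p⁻² ∑_{a ∈ L(s)} φ(-a)`; a character that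
is trivial on `L(s)` but not everywhere makes it nonzero. -/
lemma forall_eIdem_mul_adjMat_eq_zero_iff (hs : s ∈ S) :
    (∀ φ : AddChar (ZMod p × ZMod p) ℂ, φ ≠ 1 → eIdem p φ e * adjMat s = 0) ↔
      leftStab hS hT he s = ⊤ := by
  constructor
  · intro h
    by_contra hL
    obtain ⟨φ, hφ, hφL⟩ := exists_addChar_ne_one_of_ne_top hL
    obtain ⟨⟨x, y⟩, hxy⟩ := hS.2.1 s hs
    have hterm : ∀ a, φ (-a) * adjMat (e a ○ s) x y = if a ∈ leftStab hS hT he s then 1 else 0 := by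
      intro a
      by_cases ha : a ∈ leftStab hS hT he s
      · rw [if_pos ha, (mem_leftStab hS hT he).1 ha, hφL _ (neg_mem ha)]
        simp [adjMat, hxy]
      · have : (x, y) ∉ e a ○ s := fun h' =>
          ha (hS.eq_of_mem_of_mem (e_comp_mem hS hT he a hs) hs h' hxy)
        simp [adjMat, ha, this]
    have hentry := congrFun (congrFun (h φ hφ) x) y
    simp only [eIdem_mul_adjMat hS hT he, Matrix.smul_apply, Matrix.sum_apply, smul_eq_mul, hterm,
      Finset.sum_boole, Matrix.zero_apply, mul_eq_zero, inv_eq_zero, pow_eq_zero_iff',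
      Nat.cast_eq_zero, NeZero.ne p, false_and, false_or] at hentry
    have hcard : (Finset.univ.filter (· ∈ leftStab hS hT he s)).card ≠ 0 :=
      Finset.card_ne_zero.2 ⟨0, Finset.mem_filter.2 ⟨Finset.mem_univ _, zero_mem _⟩⟩
    exact hcard (by exact_mod_cast hentry)
  · intro hL φ hφ
    have h : ∀ a, e a ○ s = s := fun a => (mem_leftStab hS hT he).1 (hL ▸ AddSubgroup.mem_top a)
    have hsum : ∑ a, φ (-a) = 0 := by
      rw [← AddChar.sum_eq_zero_of_ne_one hφ]
      exact Equiv.sum_comp (Equiv.neg (ZMod p × ZMod p)) φ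
    simp only [eIdem_mul_adjMat hS hT he, h, ← Finset.sum_smul, hsum, zero_smul, smul_zero]

end matrix

end AssocScheme

theorem stmt8_general {X : Type*} [Fintype X] (p q : ℕ) [NeZero p]
    (hq : q.Prime)
    (S T : Set (Set (X × X))) (hS : IsScheme S) (hT : thinResidue S = T)
    (e : ZMod p × ZMod p → Set (X × X)) (he : IsoElemAb S T p e)
    (hquot : Nat.card {C : Set (Set (X × X)) | ∃ s ∈ S, C = cprod S (cprod S T {s}) T} = q) :
    ((∀ u ∈ S, ∀ v ∈ S, adjMat u * adjMat v = adjMat v * adjMat u) ↔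
      (∀ φ : AddChar (ZMod p × ZMod p) ℂ, φ ≠ 1 →
        ∀ s ∈ S \ T, eIdem p φ e * adjMat s = 0)) ∧
    ((∀ φ : AddChar (ZMod p × ZMod p) ℂ, φ ≠ 1 →
        ∀ s ∈ S \ T, eIdem p φ e * adjMat s = 0) ↔
      (∀ s ∈ S \ T, cprod S (cprod S T {s}) T = {s})) := by
  open AssocScheme in
  have hTN : IsStronglyNormal S T := hT ▸ isStronglyNormal_thinResidue ⟨_, hS.diagRel_mem⟩
    (by rw [hT]; exact ⟨e 0, he.1 0⟩)
  have hBs : ∀ s ∈ S, (∀ φ : AddChar (ZMod p × ZMod p) ℂ, φ ≠ 1 → eIdem p φ e * adjMat s = 0) ↔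
      quotRel T s = s := fun s hs =>
    (forall_eIdem_mul_adjMat_eq_zero_iff hS hTN he hs).trans (leftStab_eq_top_iff hS hTN he hs)
  have hB : (∀ φ : AddChar (ZMod p × ZMod p) ℂ, φ ≠ 1 → ∀ s ∈ S \ T, eIdem p φ e * adjMat s = 0) ↔
      ∀ s ∈ S \ T, quotRel T s = s :=
    ⟨fun h s hs => (hBs s hs.1).1 fun φ hφ => h φ hφ s hs,
      fun h φ hφ s hs => (hBs s hs.1).2 (h s hs) φ hφ⟩
  have hC : (∀ s ∈ S \ T, cprod S (cprod S T {s}) T = {s}) ↔ ∀ s ∈ S \ T, quotRel T s = s :=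
    forall₂_congr fun s hs => doubleCoset_eq_singleton_iff hS hTN he hs.1
  refine ⟨⟨fun hA => hB.2 fun s hs => ?_, fun h => ?_⟩, hB.trans hC.symm⟩
  · exact (leftStab_eq_top_iff hS hTN he hs.1).1 (leftStab_eq_top_of_central hS hTN he
      (e_comp_comm_of_adjMat_comm hS hTN he hA) hq hquot hT hs)
  · exact adjMat_comm_of_forall_quotRel_eq hS hTN he hq hquot (hB.1 h)

/-- equivalence of commutativity, trivial supports of induced modules, and
`|TsT| = 1` for all `s ∈ S \\ T`. -/
theorem stmt8 {X : Type*} [Fintype X] [DecidableEq X] (p q : ℕ) [NeZero p]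
    (hp : p.Prime) (hq : q.Prime)
    (S T : Set (Set (X × X))) (hS : IsScheme S) (hT : thinResidue S = T)
    (e : ZMod p × ZMod p → Set (X × X)) (he : IsoElemAb S T p e)
    (hquot : Nat.card {C : Set (Set (X × X)) | ∃ s ∈ S, C = cprod S (cprod S T {s}) T} = q) :
    ((∀ u ∈ S, ∀ v ∈ S, adjMat u * adjMat v = adjMat v * adjMat u) ↔
      (∀ φ : AddChar (ZMod p × ZMod p) ℂ, φ ≠ 1 →
        ∀ s ∈ S \ T, eIdem p φ e * adjMat s = 0)) ∧
    ((∀ φ : AddChar (ZMod p × ZMod p) ℂ, φ ≠ 1 →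
        ∀ s ∈ S \ T, eIdem p φ e * adjMat s = 0) ↔
      (∀ s ∈ S \ T, cprod S (cprod S T {s}) T = {s})) :=
  stmt8_general p q hq S T hS hT e he hquot
end
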